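/- arXiv:2108.07713 — 9 statements merged into one kernel-verified Lean document; each statement's English description precedes it below -/
import Mathlib

section
/- For every positive integer n ≥ 2 and every rational r > 0, the equation (n-2)t² + (t-1)² + w² = 2 has infinitely many rational solutions (t, w). -/
/-- For every integer `n ≥ 2` and every rational `r > 0`, the equation
`(n-2) t² + (t-1)² + w² = 2` has infinitely many rational solutions `(t, w)`. -/
theorem stmt_1 (n : ℕ) (hn : 2 ≤ n) (r : ℚ) (hr : 0 < r) :
    {p : ℚ × ℚ |
      ((n : ℚ) - 2) * p.1 ^ 2 + (p.1 - 1) ^ 2 + p.2 ^ 2 = 2}.Infinite := by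
  have hc : (2 : ℚ) ≤ (n : ℚ) := by exact_mod_cast hn
  set c : ℚ := (n : ℚ) with hcdef
  -- slope m = k + 2, point from chord through (0,1)
  set m : ℕ → ℚ := fun k => (k : ℚ) + 2 with hm
  set D : ℕ → ℚ := fun k => c - 1 + (m k) ^ 2 with hD
  have hmk : ∀ k, (2:ℚ) ≤ m k := by
    intro k
    have : (0:ℚ) ≤ (k:ℚ) := Nat.cast_nonneg k
    simp only [hm]; linarith
  have hDpos : ∀ k, 0 < D k := by
    intro k
    simp only [hD]
    nlinarith [sq_nonneg (m k), hmk k]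
  set t : ℕ → ℚ := fun k => (2 - 2 * m k) / D k with ht
  set w : ℕ → ℚ := fun k => 1 + m k * t k with hw
  have htneg : ∀ k, t k < 0 := by
    intro k
    have : 2 - 2 * m k < 0 := by linarith [hmk k]
    exact div_neg_of_neg_of_pos this (hDpos k)
  apply Set.infinite_of_injective_forall_mem (f := fun k : ℕ => (t k, w k))
  · intro k1 k2 h
    have h1 : t k1 = t k2 := congrArg Prod.fst h
    have h2 : w k1 = w k2 := congrArg Prod.snd h
    have ht1 : t k1 ≠ 0 := ne_of_lt (htneg k1)
    have : m k1 * t k1 = m k2 * t k1 := by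
      have := h2
      simp only [hw, h1] at this ⊢
      linarith [this]
    have hmeq : m k1 = m k2 := by
      have := mul_right_cancel₀ ht1 this
      exact this
    have : (k1 : ℚ) = (k2 : ℚ) := by
      simp only [hm] at hmeq; linarith
    exact_mod_cast this
  · intro k
    have hDk : D k ≠ 0 := ne_of_gt (hDpos k)
    simp only [Set.mem_setOf_eq]
    have htk : t k = (2 - 2 * m k) / D k := rfl
    have hwk : w k = 1 + m k * t k := rfl
    rw [hwk, htk]
    have hDk' : c - 1 + (m k) ^ 2 ≠ 0 := by rw [hD] at hDk; exact hDk
    field_simp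
    ring
end

section
/- For every rational d > 0 that is realized as the distance between two points of ℚ³, the complete bipartite graph K_{2,3} embeds into ℚ³ with all edges of length d; that is, there exist points a₁, a₂, b₁, b₂, b₃ ∈ ℚ³ such that ‖aᵢ - bⱼ‖ = d for all i ∈ {1,2}, j ∈ {1,2,3}, and the five points are pairwise distinct. -/
/-- For every rational `d > 0` realized as a distance between points of `ℚ³`,
the graph `K_{2,3}` embeds into `ℚ³` with all edges of length `d`
(distance conditions are stated via squared Euclidean distance). -/
theorem stmt_2 (d : ℚ) (hd : 0 < d)
    (hreal : ∃ p q : Fin 3 → ℚ, ∑ k, (p k - q k) ^ 2 = d ^ 2) :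
    ∃ a₁ a₂ b₁ b₂ b₃ : Fin 3 → ℚ,
      (∑ k, (a₁ k - b₁ k) ^ 2 = d ^ 2) ∧ (∑ k, (a₁ k - b₂ k) ^ 2 = d ^ 2) ∧
      (∑ k, (a₁ k - b₃ k) ^ 2 = d ^ 2) ∧ (∑ k, (a₂ k - b₁ k) ^ 2 = d ^ 2) ∧
      (∑ k, (a₂ k - b₂ k) ^ 2 = d ^ 2) ∧ (∑ k, (a₂ k - b₃ k) ^ 2 = d ^ 2) ∧
      List.Pairwise (· ≠ ·) [a₁, a₂, b₁, b₂, b₃] := by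
  have key : ∀ x y z : ℚ, (∑ k, (![x,y,z] : Fin 3 → ℚ) k ^ 2) = x^2+y^2+z^2 := by
    intro x y z; simp [Fin.sum_univ_three]
  refine ⟨![3*d/5, 0, 0], ![-(3*d/5), 0, 0],
    ![0, 4*d/5, 0], ![0, 12*d/25, 16*d/25], ![0, -(12*d/25), 16*d/25],
    ?_, ?_, ?_, ?_, ?_, ?_, ?_⟩
  · simp [Fin.sum_univ_three]; ring
  · simp [Fin.sum_univ_three]; ring
  · simp [Fin.sum_univ_three]; ring
  · simp [Fin.sum_univ_three]; ring
  · simp [Fin.sum_univ_three]; ring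
  · simp [Fin.sum_univ_three]; ring
  · simp only [List.pairwise_cons, List.mem_cons, List.not_mem_nil, List.mem_singleton,
      or_false]
    refine ⟨?_, ?_, ?_, ?_, by simp⟩ <;> intro x hx <;>
      rcases hx with rfl | rfl | rfl | rfl <;> intro h <;>
      first
        | (have := congrFun h 0; simp at this; linarith)
        | (have := congrFun h 1; simp at this; linarith)
        | (have := congrFun h 2; simp at this; linarith)
end

section
/- For every n ≥ 2, there exist points v₁, …, v_{n-1}, b₁, b₂, b₃ ∈ ℚⁿ such that ‖vᵢ - vⱼ‖ = √2 for all i ≠ j, ‖vᵢ - bₖ‖ = √2 for all i, k, and b₁, b₂, b₃ are pairwise distinct. -/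
/-- For every `n ≥ 2` there exist `v₁, …, v_{n-1}, b₁, b₂, b₃ ∈ ℚⁿ` with all the
distances `‖vᵢ - vⱼ‖` (`i ≠ j`) and `‖vᵢ - bₖ‖` equal to `√2` (stated via squared
distances), with `b₁, b₂, b₃` pairwise distinct. -/
theorem stmt_4 (n : ℕ) (hn : 2 ≤ n) :
    ∃ (v : Fin (n - 1) → (Fin n → ℚ)) (b : Fin 3 → (Fin n → ℚ)),
      (∀ i j, i ≠ j → ∑ k, (v i k - v j k) ^ 2 = 2) ∧
      (∀ i m, ∑ k, (v i k - b m k) ^ 2 = 2) ∧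
      Function.Injective b := by
  have h2 : (2 : ℚ) ≤ (n : ℚ) := by exact_mod_cast hn
  have hd : (n : ℚ) - 1 ≠ 0 := by intro h; nlinarith
  set L : Fin n := ⟨n - 1, by omega⟩ with hL
  set Z : Fin n := ⟨0, by omega⟩ with hZ
  have hZL : Z ≠ L := by
    simp only [hZ, hL, Ne, Fin.mk.injEq]; omega
  set e : Fin (n - 1) → Fin n := fun i => ⟨i, by omega⟩ with he
  refine ⟨fun i k => if k = e i then 1 else 0,
          fun m k => if k = L then (if (m : ℕ) = 1 then -1 else 1)
            else (if (m : ℕ) = 2 then 2 / ((n : ℚ) - 1) else 0), ?_, ?_, ?_⟩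
  · intro i j hij
    have hij' : e i ≠ e j := by
      simp only [he, Ne, Fin.mk.injEq]
      intro h; exact hij (Fin.ext h)
    have key : ∀ k : Fin n, ((if k = e i then (1:ℚ) else 0) - (if k = e j then 1 else 0)) ^ 2
        = (if k = e i then (1:ℚ) else 0) + (if k = e j then 1 else 0) := by
      intro k
      by_cases h1 : k = e i
      · have h2' : ¬ k = e j := fun h => hij' (h1.symm.trans h)
        rw [if_pos h1, if_neg h2']; norm_num
      · by_cases h2' : k = e j
        · rw [if_neg h1, if_pos h2']; norm_num
        · rw [if_neg h1, if_neg h2']; norm_num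
    rw [Finset.sum_congr rfl fun k _ => key k, Finset.sum_add_distrib,
      Finset.sum_ite_eq' Finset.univ, Finset.sum_ite_eq' Finset.univ]
    norm_num
  · intro i m
    have heiL : e i ≠ L := by
      simp only [he, hL, Ne, Fin.mk.injEq]
      have := i.isLt; omega
    have main : ∀ tm cm : ℚ,
        ∑ k : Fin n, ((if k = e i then (1:ℚ) else 0) - (if k = L then tm else cm)) ^ 2
          = (n : ℚ) * cm ^ 2 + ((tm ^ 2 - cm ^ 2) + ((1 - cm) ^ 2 - cm ^ 2)) := by
      intro tm cm
      have key : ∀ k : Fin n, ((if k = e i then (1:ℚ) else 0) - (if k = L then tm else cm)) ^ 2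
          = cm ^ 2 + ((if k = L then tm ^ 2 - cm ^ 2 else 0)
            + (if k = e i then (1 - cm) ^ 2 - cm ^ 2 else 0)) := by
        intro k
        by_cases h1 : k = e i
        · have h2' : ¬ k = L := fun h => heiL (h1.symm.trans h)
          simp only [if_pos h1, if_neg h2']; ring
        · by_cases h2' : k = L
          · simp only [if_neg h1, if_pos h2']; ring
          · simp only [if_neg h1, if_neg h2']; ring
      rw [Finset.sum_congr rfl fun k _ => key k, Finset.sum_add_distrib,
        Finset.sum_add_distrib, Finset.sum_ite_eq' Finset.univ, Finset.sum_ite_eq' Finset.univ,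
        Finset.sum_const, Finset.card_univ, Fintype.card_fin, nsmul_eq_mul]
      simp only [Finset.mem_univ, if_true]
    rw [main]
    fin_cases m <;> norm_num
    field_simp
    ring
  · have hc2 : (2 : ℚ) / ((n : ℚ) - 1) ≠ 0 := by
      have : (0 : ℚ) < (n : ℚ) - 1 := by linarith
      positivity
    intro a b hab
    have hL' := congrFun hab L
    have hZ' := congrFun hab Z
    simp only [if_pos rfl, if_neg hZL] at hL' hZ'
    fin_cases a <;> fin_cases b
    · rfl
    · exfalso; norm_num at hL'
    · exfalso; norm_num at hZ'; exact hc2 hZ'.symm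
    · exfalso; norm_num at hL'
    · rfl
    · exfalso; norm_num at hL'
    · exfalso; norm_num at hZ'; exact hd hZ'
    · exfalso; norm_num at hL'
    · rfl
end

section
/- A positive rational number x is a sum of three rational squares if and only if, writing x = a/b in lowest terms, the integer ab is a sum of three integer squares. -/
set_option maxHeartbeats 800000

/-- Davenport–Cassels descent, formulated with explicit denominators. -/
lemma dc_aux (n : ℤ) : ∀ d : ℕ, 0 < d → ∀ p q r : ℤ,
    p ^ 2 + q ^ 2 + r ^ 2 = (d : ℤ) ^ 2 * n → ∃ a b c : ℤ, n = a ^ 2 + b ^ 2 + c ^ 2 := by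
  intro d
  induction d using Nat.strong_induction_on with
  | _ d ih =>
  intro hd p q r h
  set D : ℤ := (d : ℤ) with hD
  have hD0 : 0 < D := by rw [hD]; exact_mod_cast hd
  set a : ℤ := round ((p : ℚ) / D) with ha
  set b : ℤ := round ((q : ℚ) / D) with hb
  set c : ℤ := round ((r : ℚ) / D) with hc
  have hbound : ∀ u : ℤ, ∀ v : ℤ, v = round ((u : ℚ) / D) →
      (2 * (u - D * v)) ^ 2 ≤ D ^ 2 := by
    intro u v hv
    have h1 : |(u : ℚ) / D - v| ≤ 1 / 2 := hv ▸ abs_sub_round _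
    have hDq : (0 : ℚ) < (D : ℚ) := by exact_mod_cast hD0
    have h2 : |(2 : ℚ) * (u - D * v)| ≤ D := by
      have h4 := mul_le_mul_of_nonneg_left h1 (by positivity : (0:ℚ) ≤ 2 * D)
      calc |(2 : ℚ) * (u - D * v)| = 2 * D * |(u : ℚ) / D - v| := by
            rw [abs_mul, abs_of_nonneg (by norm_num : (0:ℚ) ≤ 2),
              show ((u : ℚ) - D * v) = D * ((u:ℚ)/D - v) by field_simp, abs_mul,
              abs_of_pos hDq]; ring
        _ ≤ 2 * D * (1/2) := h4
        _ = D := by ring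
    have h3 : ((2 : ℚ) * ((u:ℚ) - (D:ℚ) * (v:ℚ))) ^ 2 ≤ ((D:ℚ)) ^ 2 := by
      rw [← sq_abs, ← sq_abs (D:ℚ), abs_of_pos hDq]
      exact pow_le_pow_left₀ (abs_nonneg _) h2 2
    exact_mod_cast h3
  have b1 := hbound p a ha
  have b2 := hbound q b hb
  have b3 := hbound r c hc
  clear hbound
  clear_value a b c
  clear ha hb hc
  set e : ℤ := (p - D * a) ^ 2 + (q - D * b) ^ 2 + (r - D * c) ^ 2 with he
  by_cases he0 : e = 0
  · have h1 : p = D * a := by nlinarith [sq_nonneg (p - D*a), sq_nonneg (q - D*b), sq_nonneg (r - D*c)]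
    have h2 : q = D * b := by nlinarith [sq_nonneg (p - D*a), sq_nonneg (q - D*b), sq_nonneg (r - D*c)]
    have h3 : r = D * c := by nlinarith [sq_nonneg (p - D*a), sq_nonneg (q - D*b), sq_nonneg (r - D*c)]
    refine ⟨a, b, c, mul_left_cancel₀ (a := D ^ 2) (by positivity) ?_⟩
    rw [← h, h1, h2, h3]; ring
  · set s : ℤ := p * a + q * b + r * c with hs
    set m : ℤ := a ^ 2 + b ^ 2 + c ^ 2 with hm
    set d' : ℤ := D * (n + m) - 2 * s with hd'
    have hdd' : D * d' = e := by rw [hd', he, hs, hm]; linear_combination -h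
    have he_pos : 0 < e := lt_of_le_of_ne (by positivity) (Ne.symm he0)
    have hd'pos : 0 < d' := by
      by_contra hcon
      push_neg at hcon
      nlinarith
    have h4e : 4 * e ≤ 3 * D ^ 2 := by
      nlinarith
    have hd'lt : d' < D := by nlinarith [mul_pos hD0 hd'pos]
    set p' : ℤ := p * (m - n) + 2 * a * (D * n - s) with hp'
    set q' : ℤ := q * (m - n) + 2 * b * (D * n - s) with hq'
    set r' : ℤ := r * (m - n) + 2 * c * (D * n - s) with hr'
    have key : p' ^ 2 + q' ^ 2 + r' ^ 2 = d' ^ 2 * n := by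
      rw [hp', hq', hr', hd', hs, hm]
      linear_combination (a ^ 2 + b ^ 2 + c ^ 2 - n) ^ 2 * h
    have hdnat : d'.toNat < d := by
      have : (d'.toNat : ℤ) = d' := Int.toNat_of_nonneg hd'pos.le
      omega
    have hdpos' : 0 < d'.toNat := by omega
    refine ih d'.toNat hdnat hdpos' p' q' r' ?_
    rw [Int.toNat_of_nonneg hd'pos.le]
    exact key

/-- A positive rational `x = a/b` in lowest terms is a sum of three rational squares
iff the integer `a * b` is a sum of three integer squares. -/
theorem stmt_7 (x : ℚ) (hx : 0 < x) :
    (∃ y z w : ℚ, x = y ^ 2 + z ^ 2 + w ^ 2) ↔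
      (∃ a b c : ℤ, x.num * (x.den : ℤ) = a ^ 2 + b ^ 2 + c ^ 2) := by
  have hden : ((x.den : ℚ)) ≠ 0 := by
    exact_mod_cast x.den_ne_zero
  have hx2 : x * (x.den : ℚ) ^ 2 = (x.num : ℚ) * (x.den : ℚ) := by
    have h0 : x * (x.den : ℚ) = (x.num : ℚ) :=
      (eq_div_iff hden).mp (Rat.num_div_den x).symm
    rw [← h0]; ring
  constructor
  · rintro ⟨y, z, w, hxy⟩
    set Y : ℚ := y * (x.den : ℚ) with hY
    set Z : ℚ := z * (x.den : ℚ) with hZ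
    set W : ℚ := w * (x.den : ℚ) with hW
    set D : ℕ := Y.den * Z.den * W.den with hD
    have hDpos : 0 < D := by
      exact Nat.mul_pos (Nat.mul_pos Y.pos Z.pos) W.pos
    set p : ℤ := Y.num * Z.den * W.den with hp
    set q : ℤ := (Y.den : ℤ) * Z.num * W.den with hq
    set r : ℤ := (Y.den : ℤ) * (Z.den : ℤ) * W.num with hr
    apply dc_aux (x.num * x.den) D hDpos p q r
    have hYc : (p : ℚ) = Y * D := by
      rw [hp, hD]; push_cast
      rw [← Rat.mul_den_eq_num Y]; ring
    have hZc : (q : ℚ) = Z * D := by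
      rw [hq, hD]; push_cast
      rw [← Rat.mul_den_eq_num Z]; ring
    have hWc : (r : ℚ) = W * D := by
      rw [hr, hD]; push_cast
      rw [← Rat.mul_den_eq_num W]; ring
    have key : (p : ℚ) ^ 2 + (q : ℚ) ^ 2 + (r : ℚ) ^ 2 = (D : ℚ) ^ 2 * ((x.num : ℚ) * x.den) := by
      rw [hYc, hZc, hWc, ← hx2, hY, hZ, hW]
      linear_combination (-(D:ℚ)^2*((x.den:ℚ))^2) * hxy
    exact_mod_cast key
  · rintro ⟨a, b, c, h⟩
    refine ⟨a / x.den, b / x.den, c / x.den, ?_⟩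
    have h' : ((x.num : ℚ)) * (x.den : ℚ) = (a:ℚ)^2 + (b:ℚ)^2 + (c:ℚ)^2 := by
      exact_mod_cast congrArg (fun t : ℤ => (t : ℚ)) h
    field_simp
    linear_combination h' + hx2
end

section
/- For all positive integers r and m, the homogeneous equation y² + z² + w² = 2rm·((4m+1)t² - x²) has a nontrivial solution in integers x, y, z, w, t. -/
/-!
Write `2rm = 2^E ω` with `ω` odd. Taking `(t, x) = (1, 0)` or `(2, 1)` makes
`D = (4m+1)t² - x²` positive with `ωD ≡ 1 [MOD 4]`, so it suffices that `2^E n` is a sum of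
three squares whenever `n ≡ 1 [MOD 4]`; dividing out squares, we may take `E ≤ 1`.

For such `N = 2^E n`, Dirichlet's theorem gives a prime `P ≡ 2n - 1 [MOD 8n]`. Then `P ≡ 1 [MOD 8]`
and `N ∣ P + 1`, so by quadratic reciprocity `-N` is a square modulo `P`, and this produces a
positive definite integral ternary form of determinant `1` representing `N`. Every value of such a
form is a sum of three squares, by induction on its first coefficient `a`: if `a = 1`, complete the
square and use that a positive binary form of determinant `1` is equivalent to `y² + z²`; if
`a ≥ 2`, Hermite's bound for the binary form left after completing the square yields a vector of
value `< a`, which after dividing by its content is the first column of a unimodular change of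
variables.
-/

open Matrix

theorem Int.exists_abs_sub_mul_le (s : ℤ) {A : ℤ} (hA : 0 < A) : ∃ k, 2 * |s - A * k| ≤ A := by
  lift A to ℕ using hA.le
  obtain ⟨k, hk⟩ := Int.ModEq.dvd (Int.bmod_emod (x := s) (m := A))
  have h1 := Int.le_bmod (x := s) (Int.natCast_pos.mp hA)
  have h2 := Int.bmod_lt (x := s) (Int.natCast_pos.mp hA)
  refine ⟨k, ?_⟩
  rw [← hk, sub_sub_cancel]
  cases abs_cases (s.bmod A) <;> omega

namespace Matrix

variable {n R : Type*}

theorem PosDef.isSymm [CommRing R] [PartialOrder R] [StarRing R] [TrivialStar R]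
    {S : Matrix n n R} (hS : S.PosDef) : S.IsSymm :=
  isHermitian_iff_isSymm.mp hS.isHermitian

variable [Fintype n]

theorem dotProduct_transpose_mul_mul_mulVec [CommSemiring R] (S U : Matrix n n R) (u v : n → R) :
    u ⬝ᵥ (Uᵀ * S * U) *ᵥ v = U *ᵥ u ⬝ᵥ S *ᵥ (U *ᵥ v) := by
  rw [← mulVec_mulVec, ← mulVec_mulVec, dotProduct_mulVec, vecMul_transpose]

theorem transpose_mul_mul_apply [CommSemiring R] (S U : Matrix n n R) (i j : n) :
    (Uᵀ * S * U) i j = U.col i ⬝ᵥ S *ᵥ U.col j := by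
  classical
  rw [← mulVec_single_one U i, ← mulVec_single_one U j, ← dotProduct_transpose_mul_mul_mulVec]
  simp

namespace PosDef

variable [CommRing R] [PartialOrder R] [StarRing R] [TrivialStar R] {S : Matrix n n R}

theorem dotProduct_mulVec_self_pos (hS : S.PosDef) {v : n → R} (hv : v ≠ 0) :
    0 < v ⬝ᵥ S *ᵥ v := by
  simpa using hS.dotProduct_mulVec_pos hv

theorem of_isSymm (hS : S.IsSymm) (hpos : ∀ v : n → R, v ≠ 0 → 0 < v ⬝ᵥ S *ᵥ v) : S.PosDef :=
  of_dotProduct_mulVec_pos (isHermitian_iff_isSymm.mpr hS) fun v hv => by simpa using hpos v hv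

theorem transpose_mul_mul [DecidableEq n] (hS : S.PosDef) {U : Matrix n n R} (hU : IsUnit U) :
    (Uᵀ * S * U).PosDef := by
  simpa [conjTranspose_eq_transpose_of_trivial] using
    hS.conjTranspose_mul_mul_same (mulVec_injective_of_isUnit hU)

end PosDef

variable [DecidableEq n] [CommRing R]

theorem isUnit_of_det_eq_one {U : Matrix n n R} (hU : U.det = 1) : IsUnit U :=
  (isUnit_iff_isUnit_det U).mpr (hU ▸ isUnit_one)

theorem range_dotProduct_transpose_mul_mul_mulVec (S : Matrix n n R) {U : Matrix n n R}
    (hU : IsUnit U) :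
    Set.range (fun v => v ⬝ᵥ (Uᵀ * S * U) *ᵥ v) = Set.range (fun v => v ⬝ᵥ S *ᵥ v) := by
  ext a
  simp only [Set.mem_range, dotProduct_transpose_mul_mul_mulVec]
  constructor
  · rintro ⟨v, rfl⟩
    exact ⟨_, rfl⟩
  · rintro ⟨w, rfl⟩
    obtain ⟨v, rfl⟩ := mulVec_surjective_iff_isUnit.mpr hU w
    exact ⟨v, rfl⟩

end Matrix

section Binary

variable {T : Matrix (Fin 2) (Fin 2) ℤ}

theorem Matrix.PosDef.exists_reduced (hT : T.PosDef) :
    ∃ U : Matrix (Fin 2) (Fin 2) ℤ, U.det = 1 ∧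
      2 * |(Uᵀ * T * U) 0 1| ≤ (Uᵀ * T * U) 0 0 ∧ (Uᵀ * T * U) 0 0 ≤ (Uᵀ * T * U) 1 1 := by
  induction h : (T 0 0).toNat using Nat.strong_induction_on generalizing T with
  | _ k ih =>
  obtain ⟨s, hs⟩ := Int.exists_abs_sub_mul_le (T 0 1) hT.diag_pos
  set S : Matrix (Fin 2) (Fin 2) ℤ := !![1, -s; 0, 1]
  have hS : S.det = 1 := by simp [S, det_fin_two]
  set T₁ := Sᵀ * T * S
  have h00 : T₁ 0 0 = T 0 0 := by simp [T₁, S, mul_apply, Fin.sum_univ_two]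
  have h01 : T₁ 0 1 = T 0 1 - T 0 0 * s := by simp [T₁, S, mul_apply, Fin.sum_univ_two]; ring
  by_cases hle : T₁ 0 0 ≤ T₁ 1 1
  · exact ⟨S, hS, show 2 * |T₁ 0 1| ≤ T₁ 0 0 by rwa [h01, h00], hle⟩
  set W : Matrix (Fin 2) (Fin 2) ℤ := !![0, -1; 1, 0]
  have hW : W.det = 1 := by simp [W, det_fin_two]
  have hT₁ : T₁.PosDef := hT.transpose_mul_mul (isUnit_of_det_eq_one hS)
  have hswap : (Wᵀ * T₁ * W) 0 0 = T₁ 1 1 := by simp [W, mul_apply, Fin.sum_univ_two]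
  obtain ⟨U, hU, hred⟩ := ih _ (by have := hT₁.diag_pos (i := 1); omega)
    (hT₁.transpose_mul_mul (isUnit_of_det_eq_one hW)) rfl
  refine ⟨S * W * U, by simp [det_mul, hS, hW, hU], ?_⟩
  simpa only [T₁, transpose_mul, Matrix.mul_assoc] using hred

theorem Matrix.PosDef.exists_sq_le_det (hT : T.PosDef) :
    ∃ v ≠ 0, 3 * (v ⬝ᵥ T *ᵥ v) ^ 2 ≤ 4 * T.det := by
  obtain ⟨U, hU, h01, h0011⟩ := hT.exists_reduced
  set R := Uᵀ * T * U
  have hR : R.PosDef := hT.transpose_mul_mul (isUnit_of_det_eq_one hU)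
  have hdet : R.det = T.det := by simp [R, det_mul, hU]
  refine ⟨U.col 0, fun h => by simpa [R, transpose_mul_mul_apply, h] using hR.diag_pos (i := 0),
    ?_⟩
  rw [← transpose_mul_mul_apply, ← hdet, det_fin_two, hR.isSymm.apply 0 1]
  cases abs_cases (R 0 1) <;> nlinarith

theorem Matrix.PosDef.exists_sum_two_sq (hT : T.PosDef) (hdet : T.det = 1) (v : Fin 2 → ℤ) :
    ∃ x y : ℤ, x ^ 2 + y ^ 2 = v ⬝ᵥ T *ᵥ v := by
  obtain ⟨U, hU, h01, h0011⟩ := hT.exists_reduced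
  set R := Uᵀ * T * U
  have hR : R.PosDef := hT.transpose_mul_mul (isUnit_of_det_eq_one hU)
  have hRdet : R 0 0 * R 1 1 - R 0 1 ^ 2 = 1 := by
    have : R.det = 1 := by simp [R, det_mul, hU, hdet]
    rw [det_fin_two, hR.isSymm.apply 0 1] at this
    linear_combination this
  have hR00 : R 0 0 = 1 := by
    have := hR.diag_pos (i := 0)
    cases abs_cases (R 0 1) <;> nlinarith
  have hR01 : R 0 1 = 0 := by rw [hR00] at h01; cases abs_cases (R 0 1) <;> omega
  have hR1 : R = 1 := by
    ext i j
    fin_cases i <;> fin_cases j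
    · simpa using hR00
    · simpa using hR01
    · simpa [hR.isSymm.apply 0 1] using hR01
    · simpa [hR00, hR01] using hRdet
  obtain ⟨w, hw⟩ : v ⬝ᵥ T *ᵥ v ∈ Set.range (fun w => w ⬝ᵥ R *ᵥ w) := by
    rw [range_dotProduct_transpose_mul_mul_mulVec _ (isUnit_of_det_eq_one hU)]
    exact ⟨v, rfl⟩
  refine ⟨w 0, w 1, ?_⟩
  rw [← hw]
  simp [hR1, dotProduct, Fin.sum_univ_two, sq]

theorem Matrix.PosDef.of_det_pos_fin_two (hT : T.IsSymm) (h0 : 0 < T 0 0) (hdet : 0 < T.det) :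
    T.PosDef := by
  refine PosDef.of_isSymm hT fun v hv => ?_
  have key : T 0 0 * (v ⬝ᵥ T *ᵥ v) = (T 0 0 * v 0 + T 0 1 * v 1) ^ 2 + T.det * v 1 ^ 2 := by
    simp only [det_fin_two, dotProduct, mulVec, Fin.sum_univ_two, hT.apply 0 1]
    ring
  rcases eq_or_ne (v 1) 0 with h1 | h1
  · have h0' : v 0 ≠ 0 := fun h => hv (by ext i; fin_cases i <;> simp [h, h1])
    rw [h1] at key
    nlinarith [sq_pos_of_ne_zero h0', mul_pos h0 h0]
  · nlinarith [sq_pos_of_ne_zero h1, sq_nonneg (T 0 0 * v 0 + T 0 1 * v 1)]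

end Binary

section Ternary

variable {S : Matrix (Fin 3) (Fin 3) ℤ}

/-- The binary form left after completing the square in the first variable:
`S 0 0` times the Schur complement of the entry `S 0 0`. -/
def Matrix.schurForm (S : Matrix (Fin 3) (Fin 3) ℤ) : Matrix (Fin 2) (Fin 2) ℤ :=
  !![S 0 0 * S 1 1 - S 0 1 ^ 2, S 0 0 * S 1 2 - S 0 1 * S 0 2;
     S 0 0 * S 1 2 - S 0 1 * S 0 2, S 0 0 * S 2 2 - S 0 2 ^ 2]

theorem Matrix.isSymm_schurForm (S : Matrix (Fin 3) (Fin 3) ℤ) : S.schurForm.IsSymm := by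
  ext i j
  fin_cases i <;> fin_cases j <;> rfl

theorem Matrix.IsSymm.mul_dotProduct_mulVec_eq (hS : S.IsSymm) (v : Fin 3 → ℤ) :
    S 0 0 * (v ⬝ᵥ S *ᵥ v) =
      (S 0 0 * v 0 + S 0 1 * v 1 + S 0 2 * v 2) ^ 2 + ![v 1, v 2] ⬝ᵥ S.schurForm *ᵥ ![v 1, v 2] := by
  simp [schurForm, dotProduct, mulVec, Fin.sum_univ_succ, hS.apply 0 1, hS.apply 0 2,
    hS.apply 1 2]
  ring

theorem Matrix.IsSymm.det_schurForm (hS : S.IsSymm) : S.schurForm.det = S 0 0 * S.det := by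
  simp only [schurForm, det_fin_two, det_fin_three, of_apply, cons_val', cons_val_zero,
    cons_val_fin_one, cons_val_one, hS.apply 0 1, hS.apply 0 2, hS.apply 1 2]
  ring

theorem Matrix.PosDef.schurForm (hS : S.PosDef) : S.schurForm.PosDef := by
  refine PosDef.of_isSymm (isSymm_schurForm S) fun w hw => ?_
  have ha : 0 < S 0 0 := hS.diag_pos
  set v : Fin 3 → ℤ := ![-(S 0 1 * w 0 + S 0 2 * w 1), S 0 0 * w 0, S 0 0 * w 1]
  have hv : v ≠ 0 := fun h => hw <| by
    ext i
    fin_cases i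
    · simpa [v, ha.ne'] using congrFun h 1
    · simpa [v, ha.ne'] using congrFun h 2
  have key : S 0 0 * (v ⬝ᵥ S *ᵥ v) = S 0 0 * (S 0 0 * (w ⬝ᵥ S.schurForm *ᵥ w)) := by
    rw [hS.isSymm.mul_dotProduct_mulVec_eq]
    simp [v, Matrix.schurForm, dotProduct, mulVec, Fin.sum_univ_succ]
    ring
  have hpos := hS.dotProduct_mulVec_self_pos hv
  rw [mul_left_cancel₀ ha.ne' key] at hpos
  exact pos_of_mul_pos_right hpos ha.le

theorem Matrix.PosDef.of_det_pos_fin_three (hS : S.IsSymm) (h0 : 0 < S 0 0)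
    (h1 : 0 < S 0 0 * S 1 1 - S 0 1 ^ 2) (hdet : 0 < S.det) : S.PosDef := by
  have hC : S.schurForm.PosDef :=
    .of_det_pos_fin_two (isSymm_schurForm S) h1 (by rw [hS.det_schurForm]; positivity)
  refine PosDef.of_isSymm hS fun v hv => ?_
  have key := hS.mul_dotProduct_mulVec_eq v
  by_cases htail : ![v 1, v 2] = 0
  · have h1 : v 1 = 0 := by simpa using congrFun htail 0
    have h2 : v 2 = 0 := by simpa using congrFun htail 1
    have h0' : v 0 ≠ 0 := fun h => hv (by ext i; fin_cases i <;> simp [h, h1, h2])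
    rw [htail, zero_dotProduct, h1, h2] at key
    nlinarith [sq_pos_of_ne_zero (mul_ne_zero h0.ne' h0')]
  · nlinarith [hC.dotProduct_mulVec_self_pos htail,
      sq_nonneg (S 0 0 * v 0 + S 0 1 * v 1 + S 0 2 * v 2)]

theorem Matrix.PosDef.exists_dotProduct_mulVec_lt (hS : S.PosDef) (hdet : S.det = 1)
    (h2 : 2 ≤ S 0 0) : ∃ v ≠ 0, v ⬝ᵥ S *ᵥ v < S 0 0 := by
  have ha : 0 < S 0 0 := hS.diag_pos
  obtain ⟨w, hw, hHermite⟩ := hS.schurForm.exists_sq_le_det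
  rw [hS.isSymm.det_schurForm, hdet, mul_one] at hHermite
  have hCpos := hS.schurForm.dotProduct_mulVec_self_pos hw
  obtain ⟨k, hk⟩ := Int.exists_abs_sub_mul_le (S 0 1 * w 0 + S 0 2 * w 1) ha
  set v : Fin 3 → ℤ := ![-k, w 0, w 1]
  have hv : v ≠ 0 := fun h => hw <| by
    ext i
    fin_cases i
    · simpa [v] using congrFun h 1
    · simpa [v] using congrFun h 2
  set t := S 0 1 * w 0 + S 0 2 * w 1 - S 0 0 * k
  have htail : ![v 1, v 2] = w := by ext i; fin_cases i <;> rfl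
  have key : S 0 0 * (v ⬝ᵥ S *ᵥ v) = t ^ 2 + w ⬝ᵥ S.schurForm *ᵥ w := by
    rw [hS.isSymm.mul_dotProduct_mulVec_eq, htail]
    congr 2
    simp only [v, t, cons_val_zero, cons_val_one, cons_val, mul_neg]
    ring
  have ht : 4 * t ^ 2 ≤ S 0 0 ^ 2 := by nlinarith [sq_abs t, abs_nonneg t]
  refine ⟨v, hv, ?_⟩
  by_contra! hge
  -- with `a = S 0 0`, `C = w ⬝ᵥ S.schurForm *ᵥ w`: `3a² ≤ 4C`, so `27a⁴ ≤ 48C² ≤ 64a`, but `a ≥ 2`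
  have hC : 3 * S 0 0 ^ 2 ≤ 4 * (w ⬝ᵥ S.schurForm *ᵥ w) := by nlinarith
  nlinarith

theorem exists_det_eq_one_and_eq_smul_col_zero (v : Fin 3 → ℤ) :
    ∃ (g : ℤ) (U : Matrix (Fin 3) (Fin 3) ℤ), U.det = 1 ∧ v = g • U.col 0 := by
  obtain ⟨Y, Z, hy, hz, hYZ⟩ := extract_gcd (v 1) (v 2)
  obtain ⟨X, D, hx, hd, hXD⟩ := extract_gcd (v 0) (gcd (v 1) (v 2))
  obtain ⟨s, t, hst⟩ := (gcd_isUnit_iff Y Z).mp hYZ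
  obtain ⟨u, w, huw⟩ := (gcd_isUnit_iff X D).mp hXD
  refine ⟨gcd (v 0) (gcd (v 1) (v 2)), !![X, -w, 0; D * Y, u * Y, -t; D * Z, u * Z, s], ?_, ?_⟩
  · -- the determinant is `(u X + w D) (s Y + t Z)`
    rw [det_fin_three]
    simp
    linear_combination (u * X + w * D) * hst + huw
  · ext i
    fin_cases i
    · simpa using hx
    · simp [col]
      linear_combination hy + Y * hd
    · simp [col]
      linear_combination hz + Z * hd

theorem Matrix.PosDef.exists_sum_three_sq (hS : S.PosDef) (hdet : S.det = 1) (v : Fin 3 → ℤ) :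
    ∃ x y z : ℤ, x ^ 2 + y ^ 2 + z ^ 2 = v ⬝ᵥ S *ᵥ v := by
  induction h : (S 0 0).toNat using Nat.strong_induction_on generalizing S v with
  | _ k ih =>
  rcases (show S 0 0 = 1 ∨ 2 ≤ S 0 0 by have := hS.diag_pos (i := 0); omega) with h1 | h2
  · have key := hS.isSymm.mul_dotProduct_mulVec_eq v
    rw [h1, one_mul, one_mul] at key
    obtain ⟨y, z, hyz⟩ := hS.schurForm.exists_sum_two_sq
      (by rw [hS.isSymm.det_schurForm, h1, hdet, one_mul]) ![v 1, v 2]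
    exact ⟨v 0 + S 0 1 * v 1 + S 0 2 * v 2, y, z, by rw [key, ← hyz, add_assoc]⟩
  obtain ⟨w, hw, hlt⟩ := hS.exists_dotProduct_mulVec_lt hdet h2
  obtain ⟨g, U, hU, rfl⟩ := exists_det_eq_one_and_eq_smul_col_zero w
  set R := Uᵀ * S * U
  have hR : R.PosDef := hS.transpose_mul_mul (isUnit_of_det_eq_one hU)
  have hg : g ≠ 0 := by rintro rfl; simp at hw
  have hval : g • U.col 0 ⬝ᵥ S *ᵥ (g • U.col 0) = g ^ 2 * R 0 0 := by
    rw [show R 0 0 = _ from transpose_mul_mul_apply S U 0 0, mulVec_smul, smul_dotProduct,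
      dotProduct_smul, smul_eq_mul, smul_eq_mul]
    ring
  have hR00 : R 0 0 < S 0 0 := by nlinarith [hR.diag_pos (i := 0), sq_pos_of_ne_zero hg]
  obtain ⟨u, hu⟩ : v ⬝ᵥ S *ᵥ v ∈ Set.range fun u => u ⬝ᵥ R *ᵥ u := by
    rw [range_dotProduct_transpose_mul_mul_mulVec _ (isUnit_of_det_eq_one hU)]
    exact ⟨v, rfl⟩
  rw [← hu]
  exact ih _ (by have := hR.diag_pos (i := 0); omega) hR (by simp [R, det_mul, hU, hdet]) u rfl

end Ternary

theorem exists_sum_three_sq_of_dvd_prime_add_one {N P : ℕ} [Fact P.Prime] (hNP : N ∣ P + 1)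
    (hsq : IsSquare (-(N : ZMod P))) : ∃ x y z : ℤ, x ^ 2 + y ^ 2 + z ^ 2 = N := by
  obtain ⟨A, hA⟩ := hNP
  have hA' : (P : ℤ) + 1 = N * A := by exact_mod_cast hA
  have hN : N ≠ 0 := by rintro rfl; simp at hA
  obtain ⟨β, hβ⟩ := hsq
  set b : ℤ := β.val * A
  -- `N b² = N β² A² = -(NA)² ≡ -1 [MOD P]`, since `NA = P + 1`
  obtain ⟨c, hc⟩ : (P : ℤ) ∣ 1 + N * b ^ 2 := by
    rw [← ZMod.intCast_zmod_eq_zero_iff_dvd]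
    have hNA : (N : ZMod P) * A = 1 := by
      rw [← Nat.cast_mul, ← hA]
      push_cast
      rw [ZMod.natCast_self, zero_add]
    have hb : (b : ZMod P) = β * A := by simp [b]
    push_cast
    rw [hb]
    linear_combination (-(N : ZMod P) * A - 1) * hNA - (N : ZMod P) * A ^ 2 * hβ
  -- `det S = c P - N b² = 1`, and `S` takes the value `N` at `(1, 0, 0)`
  set S : Matrix (Fin 3) (Fin 3) ℤ := !![(N : ℤ), 1, 0; 1, A, b; 0, b, c]
  have hdet : S.det = 1 := by
    rw [det_fin_three]
    simp [S]
    linear_combination -c * hA' - hc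
  have hS : S.PosDef := by
    refine .of_det_pos_fin_three ?_ ?_ ?_ (by rw [hdet]; exact one_pos)
    · ext i j
      fin_cases i <;> fin_cases j <;> rfl
    · simpa [S, Nat.pos_iff_ne_zero] using hN
    · have := (Fact.out : P.Prime).two_le
      simp [S]
      linarith
  obtain ⟨x, y, z, h⟩ := hS.exists_sum_three_sq hdet ![1, 0, 0]
  exact ⟨x, y, z, by rw [h]; simp [S, vecHead]⟩

theorem exists_prime_mod_eight_eq_one_and_dvd {n : ℕ} (hn : n % 4 = 1) :
    ∃ P : ℕ, P.Prime ∧ P % 8 = 1 ∧ 2 * n ∣ P + 1 := by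
  have hcop : (2 * n - 1).Coprime (4 * (2 * n)) := by
    refine Nat.Coprime.mul_right ?_ ?_
    · exact Nat.Coprime.pow_right 2 (Nat.coprime_two_right.mpr (Nat.odd_iff.mpr (by omega)))
    · rw [Nat.coprime_self_sub_left (by omega)]
      exact Nat.coprime_one_left _
  obtain ⟨P, -, hP, hPmod⟩ := Nat.forall_exists_prime_gt_and_modEq 0 (by omega) hcop
  have h1 : P + 1 ≡ 2 * n [MOD 4 * (2 * n)] := by
    simpa [Nat.sub_add_cancel (by omega : 1 ≤ 2 * n)] using hPmod.add_right 1
  have h8 : P + 1 ≡ 2 * n [MOD 8] := h1.of_dvd ⟨n, by ring⟩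
  have h2n : P + 1 ≡ 0 [MOD 2 * n] :=
    (h1.of_mul_left 4).trans (Nat.modEq_zero_iff_dvd.mpr dvd_rfl)
  exact ⟨P, hP, by unfold Nat.ModEq at h8; omega, Nat.modEq_zero_iff_dvd.mp h2n⟩

theorem isSquare_neg_two_pow_mul {P : ℕ} [Fact P.Prime] (ε : ℕ) {n : ℕ} (hn : n % 4 = 1)
    (hP : P % 8 = 1) (hnP : n ∣ P + 1) : IsSquare (-(2 ^ ε * n : ZMod P)) := by
  have hneg : IsSquare (-1 : ZMod P) := ZMod.exists_sq_eq_neg_one_iff.mpr (by omega)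
  have htwo : IsSquare (2 : ZMod P) := (ZMod.exists_sq_eq_two_iff (by omega)).mpr (Or.inl hP)
  have hodd : Odd n := Nat.odd_iff.mpr (by omega)
  have hJ : jacobiSym n P = 1 := by
    have hPn : (P : ℤ) ≡ -1 [ZMOD n] := by
      refine (Int.modEq_iff_dvd.mpr ?_).symm
      simpa using Int.natCast_dvd_natCast.mpr hnP
    rw [jacobiSym.quadratic_reciprocity_one_mod_four' hodd (by omega), jacobiSym.mod_left' hPn,
      jacobiSym.at_neg_one hodd, ZMod.χ₄_nat_one_mod_four hn]
  have hnsq : IsSquare (n : ZMod P) := by simpa using ZMod.isSquare_of_jacobiSym_eq_one hJ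
  rw [neg_eq_neg_one_mul]
  exact hneg.mul ((htwo.pow ε).mul hnsq)

theorem exists_sum_three_sq_two_pow_mul {n : ℕ} (hn : n % 4 = 1) (E : ℕ) :
    ∃ x y z : ℤ, x ^ 2 + y ^ 2 + z ^ 2 = 2 ^ E * n := by
  obtain ⟨P, hP, hP8, hnP⟩ := exists_prime_mod_eight_eq_one_and_dvd hn
  have := Fact.mk hP
  have hdvd : 2 ^ (E % 2) * n ∣ P + 1 :=
    (mul_dvd_mul_right (pow_dvd_pow 2 (by omega : E % 2 ≤ 1)) n).trans (by simpa using hnP)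
  obtain ⟨x, y, z, h⟩ := exists_sum_three_sq_of_dvd_prime_add_one hdvd
    (by simpa using isSquare_neg_two_pow_mul (E % 2) hn hP8 (dvd_of_mul_left_dvd hnP))
  have hE : (2 : ℤ) ^ E = (2 ^ (E / 2)) ^ 2 * 2 ^ (E % 2) := by
    rw [← pow_mul, ← pow_add, Nat.div_add_mod']
  push_cast at h
  refine ⟨2 ^ (E / 2) * x, 2 ^ (E / 2) * y, 2 ^ (E / 2) * z, ?_⟩
  rw [hE]
  linear_combination (2 ^ (E / 2)) ^ 2 * h

theorem exists_sq_sub_sq_mul_mod_four_eq_one (m : ℕ) {ω : ℕ} (hω : Odd ω) :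
    ∃ (t x : ℤ) (D : ℕ), t ≠ 0 ∧ (4 * m + 1) * t ^ 2 - x ^ 2 = D ∧ ω * D % 4 = 1 := by
  rcases (by have := Nat.odd_iff.mp hω; omega : ω % 4 = 1 ∨ ω % 4 = 3) with h | h
  · refine ⟨1, 0, 4 * m + 1, one_ne_zero, by push_cast; ring, ?_⟩
    rw [Nat.mul_mod, h]
    omega
  · refine ⟨2, 1, 16 * m + 3, two_ne_zero, by push_cast; ring, ?_⟩
    rw [Nat.mul_mod, h]
    omega

/-- For all positive integers `r, m`, the homogeneous equation
`y² + z² + w² = 2rm((4m+1)t² - x²)` has a nontrivial integer solution. -/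
theorem stmt_9 (r m : ℕ) (hr : 0 < r) (hm : 0 < m) :
    ∃ x y z w t : ℤ, ¬ (x = 0 ∧ y = 0 ∧ z = 0 ∧ w = 0 ∧ t = 0) ∧
      y ^ 2 + z ^ 2 + w ^ 2 = 2 * r * m * ((4 * m + 1) * t ^ 2 - x ^ 2) := by
  obtain ⟨E, ω, hω, hrm⟩ := Nat.exists_eq_two_pow_mul_odd (n := 2 * r * m) (by positivity)
  obtain ⟨t, x, D, ht, hD, hωD⟩ := exists_sq_sub_sq_mul_mod_four_eq_one m hω
  obtain ⟨y, z, w, h⟩ := exists_sum_three_sq_two_pow_mul hωD E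
  refine ⟨x, y, z, w, t, fun h0 => ht h0.2.2.2.2, ?_⟩
  rw [h, hD, show (2 * r * m : ℤ) = (2 ^ E * ω : ℕ) by rw [← hrm]; push_cast; ring]
  push_cast
  ring
end

section
/- For every positive integer n, either C₁(ℚⁿ) = n + 1 or C₁(ℚⁿ) = n, where C₁(ℚⁿ) is the maximum m such that there exist m points of ℚⁿ that are pairwise equidistant (at some common positive distance). Moreover C₁(ℚⁿ) = n + 1 if and only if one of the following holds: (i) n is even and n+1 is a perfect square; (ii) n ≡ 3 (mod 4); (iii) n ≡ 1 (mod 4) and n+1 is a sum of two integer squares. -/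
/-!
Polarization turns a regular simplex of squared side `d` into edge vectors with Gram matrix
`(d/2)(I + J)`, of determinant `(d/2)^m (m + 1)`. By rank this rules out `n + 2` points in `ℚⁿ`,
and for `n + 1` points it makes `(d/2)^n (n + 1)` a rational square, so `n + 1` is a square when
`n` is even. For odd `n`, the centred and rescaled vertices with a coordinate `1` prepended form
`n + 1` orthogonal vectors of squared length `n + 1` in `ℚⁿ⁺¹`; conversely such a frame,
projected along the unit vector through the sum of its rows, is a regular simplex in `ℚⁿ`.
Quaternion matrices give such frames whenever `4 ∣ n + 1`, and `2 × 2` blocks when `n + 1` is a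
sum of two squares. When `n + 1 ≡ 2 (mod 4)`, Witt cancellation, realised over `ℚ` by
Householder reflections, strips a quaternion frame of size `n - 1` off the frame and leaves two
orthogonal vectors of `ℚ²` of squared length `n + 1`.
-/

/-- `hasCliqueQ n m d` : there exist `m` points of `ℚⁿ` pairwise at squared
Euclidean distance `d`. -/
def hasCliqueQ (n m : ℕ) (d : ℚ) : Prop :=
  ∃ p : Fin m → (Fin n → ℚ), ∀ i j, i ≠ j → ∑ k, (p i k - p j k) ^ 2 = d

/-- `hasSimplexQ n m` : there exist `m` pairwise equidistant points of `ℚⁿ`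
(at some common positive distance). -/
def hasSimplexQ (n m : ℕ) : Prop := ∃ d : ℚ, 0 < d ∧ hasCliqueQ n m d

open Matrix
open scoped Kronecker

theorem Nat.eq_sq_add_sq_of_mul_sq {n m : ℕ} (hm : m ≠ 0)
    (h : ∃ x y, n * m ^ 2 = x ^ 2 + y ^ 2) :
    ∃ x y, n = x ^ 2 + y ^ 2 := by
  rcases n.eq_zero_or_pos with rfl | hn
  · exact ⟨0, 0, rfl⟩
  rw [Nat.eq_sq_add_sq_iff] at h ⊢
  intro q hq hq4
  have : Fact q.Prime := ⟨Nat.prime_of_mem_primeFactors hq⟩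
  have hnm := h q (Nat.primeFactors_mono (dvd_mul_right n _) (by positivity) hq) hq4
  rw [padicValNat.mul hn.ne' (by positivity), padicValNat.pow m 2] at hnm
  simpa [Nat.even_add, parity_simps] using hnm

theorem Int.exists_sq_add_sq_of_ratCast {n : ℕ} {x y : ℚ} (h : (n : ℚ) = x ^ 2 + y ^ 2) :
    ∃ a b : ℤ, (n : ℤ) = a ^ 2 + b ^ 2 := by
  have hZ : (n : ℤ) * ((x.den * y.den : ℕ) : ℤ) ^ 2 =
      (x.num * y.den) ^ 2 + (y.num * x.den) ^ 2 := by
    have hx := Rat.mul_den_eq_num x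
    have hy := Rat.mul_den_eq_num y
    exact_mod_cast (show (n : ℚ) * ((x.den * y.den : ℕ) : ℚ) ^ 2 =
      (x.num * y.den) ^ 2 + (y.num * x.den) ^ 2 by rw [← hx, ← hy, h]; push_cast; ring)
  obtain ⟨a, b, hab⟩ := Nat.eq_sq_add_sq_of_mul_sq (n := n) (m := x.den * y.den)
    (by positivity) ⟨(x.num * y.den).natAbs, (y.num * x.den).natAbs, by
      zify; simpa only [abs_mul, sq_abs, mul_pow, Nat.abs_cast, Nat.cast_mul] using hZ⟩
  exact ⟨a, b, by exact_mod_cast hab⟩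

namespace Schoenberg

lemma two_mul_dotProduct {ι R : Type*} [Fintype ι] [CommRing R] (x y : ι → R) :
    2 * (x ⬝ᵥ y) = x ⬝ᵥ x + y ⬝ᵥ y - (x - y) ⬝ᵥ (x - y) := by
  simp only [sub_dotProduct, dotProduct_sub, dotProduct_comm y x]
  ring

lemma hasCliqueQ_iff {n m : ℕ} {d : ℚ} : hasCliqueQ n m d ↔
    ∃ p : Fin m → Fin n → ℚ, ∀ i j, i ≠ j → (p i - p j) ⬝ᵥ (p i - p j) = d := by
  simp only [hasCliqueQ, dotProduct, Pi.sub_apply, sq]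

lemma hasSimplexQ_self (n : ℕ) : hasSimplexQ n n := by
  refine ⟨2, two_pos, hasCliqueQ_iff.2 ⟨fun i => Pi.single i 1, fun i j hij => ?_⟩⟩
  norm_num [dotProduct_sub, hij, hij.symm]

section Gram

variable {n m : ℕ} {d : ℚ}

def edgeMatrix (p : Fin (m + 1) → Fin n → ℚ) : Matrix (Fin m) (Fin n) ℚ :=
  of fun i => p i.succ - p 0

lemma edgeMatrix_mul_transpose {p : Fin (m + 1) → Fin n → ℚ}
    (hp : ∀ i j, i ≠ j → (p i - p j) ⬝ᵥ (p i - p j) = d) :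
    edgeMatrix p * (edgeMatrix p)ᵀ = (d / 2) • (1 + vecMulVec 1 1) := by
  ext i j
  have hpolar := two_mul_dotProduct (p i.succ - p 0) (p j.succ - p 0)
  rw [sub_sub_sub_cancel_right, hp _ _ (Fin.succ_ne_zero i), hp _ _ (Fin.succ_ne_zero j)] at hpolar
  rw [mul_apply', Matrix.smul_apply, Matrix.add_apply, vecMulVec_apply, one_apply]
  change (p i.succ - p 0) ⬝ᵥ (p j.succ - p 0) = _
  rcases eq_or_ne i j with rfl | hij
  · simp only [sub_self, zero_dotProduct, if_true] at hpolar ⊢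
    simp only [Pi.one_apply, smul_eq_mul]
    linarith
  · rw [hp _ _ (Fin.succ_injective _ |>.ne hij)] at hpolar
    simp only [hij, if_false, Pi.one_apply, smul_eq_mul]
    linarith

lemma det_edgeMatrix_mul_transpose {p : Fin (m + 1) → Fin n → ℚ}
    (hp : ∀ i j, i ≠ j → (p i - p j) ⬝ᵥ (p i - p j) = d) :
    (edgeMatrix p * (edgeMatrix p)ᵀ).det = (d / 2) ^ m * (m + 1) := by
  rw [edgeMatrix_mul_transpose hp, det_smul, vecMulVec_eq Unit,
    det_one_add_replicateCol_mul_replicateRow]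
  simp [add_comm]

lemma not_hasCliqueQ_add_two (hd : 0 < d) : ¬ hasCliqueQ n (n + 2) d := by
  rw [hasCliqueQ_iff]
  rintro ⟨p, hp⟩
  set W := edgeMatrix p
  have hunit : IsUnit (W * Wᵀ) := by
    rw [isUnit_iff_isUnit_det, det_edgeMatrix_mul_transpose hp]
    exact (by positivity : (d / 2) ^ (n + 1) * ((n + 1 : ℕ) + 1 : ℚ) ≠ 0).isUnit
  have hrank := (W * Wᵀ).rank_of_isUnit hunit ▸ rank_mul_le_right W Wᵀ
  have := Wᵀ.rank_le_card_height
  simp only [Fintype.card_fin] at hrank this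
  omega

lemma isSquare_of_hasCliqueQ (h : hasCliqueQ n (n + 1) d) : IsSquare ((d / 2) ^ n * (n + 1)) := by
  obtain ⟨p, hp⟩ := hasCliqueQ_iff.1 h
  refine ⟨(edgeMatrix p).det, ?_⟩
  rw [← det_edgeMatrix_mul_transpose hp, det_mul, det_transpose]

end Gram

def HasOrthogonalFrame (m k : ℕ) (c : ℚ) : Prop :=
  ∃ A : Matrix (Fin m) (Fin k) ℚ, A * Aᵀ = c • 1

lemma dotProduct_eq_of_mul_transpose_eq_smul_one {ι κ R : Type*} [Fintype κ] [DecidableEq ι]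
    [CommSemiring R] {A : Matrix ι κ R} {c : R} (hA : A * Aᵀ = c • 1) (i j : ι) :
    A i ⬝ᵥ A j = if i = j then c else 0 := by
  simpa [mul_apply', one_apply] using congrFun (congrFun hA i) j

lemma hasOrthogonalFrame_sq (m : ℕ) (a : ℚ) : HasOrthogonalFrame m m (a ^ 2) :=
  ⟨a • 1, by simp [sq, smul_smul]⟩

lemma hasOrthogonalFrame_sq_add_sq (a b : ℚ) : HasOrthogonalFrame 2 2 (a ^ 2 + b ^ 2) := by
  refine ⟨!![a, b; -b, a], ?_⟩
  ext i j
  fin_cases i <;> fin_cases j <;> simp [mul_apply, Fin.sum_univ_two] <;> ring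

lemma hasOrthogonalFrame_four_sq (a b c d : ℚ) :
    HasOrthogonalFrame 4 4 (a ^ 2 + b ^ 2 + c ^ 2 + d ^ 2) := by
  refine ⟨!![a, b, c, d; -b, a, -d, c; -c, d, a, -b; -d, -c, b, a], ?_⟩
  ext i j
  fin_cases i <;> fin_cases j <;> simp [mul_apply, Fin.sum_univ_four] <;> ring

lemma HasOrthogonalFrame.mul_left {b : ℕ} {c : ℚ} (h : HasOrthogonalFrame b b c) (m : ℕ) :
    HasOrthogonalFrame (m * b) (m * b) c := by
  obtain ⟨B, hB⟩ := h
  refine ⟨reindex finProdFinEquiv finProdFinEquiv (1 ⊗ₖ B), ?_⟩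
  rw [transpose_reindex, reindex_apply, reindex_apply, submatrix_mul_equiv,
    ← kroneckerMap_transpose, transpose_one, ← mul_kronecker_mul, one_mul, hB, kronecker_smul,
    one_kronecker_one]
  exact congrArg (c • ·) (submatrix_one_equiv (α := ℚ) finProdFinEquiv.symm)

lemma hasOrthogonalFrame_of_four_dvd {m : ℕ} (hm : 4 ∣ m) (N : ℕ) :
    HasOrthogonalFrame m m N := by
  obtain ⟨a, b, c, d, habcd⟩ := Nat.sum_four_squares N
  obtain ⟨t, rfl⟩ := hm
  have hN : (N : ℚ) = (a : ℚ) ^ 2 + b ^ 2 + c ^ 2 + d ^ 2 := mod_cast habcd.symm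
  rw [hN, mul_comm 4 t]
  exact (hasOrthogonalFrame_four_sq _ _ _ _).mul_left t

lemma transpose_mul_self_eq_vecMulVec_add {k : ℕ} {ι R : Type*} [CommSemiring R]
    (M : Matrix (Fin (k + 1)) ι R) :
    Mᵀ * M = vecMulVec (M 0) (M 0) + (M.submatrix Fin.succ id)ᵀ * M.submatrix Fin.succ id := by
  ext a b
  simp [mul_apply, Fin.sum_univ_succ, vecMulVec_apply]

def householder {ι K : Type*} [Fintype ι] [DecidableEq ι] [Field K] (w : ι → K) :
    Matrix ι ι K :=
  1 - (2 / (w ⬝ᵥ w)) • vecMulVec w w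

lemma transpose_mul_householder {ι K : Type*} [Fintype ι] [DecidableEq ι] [Field K]
    (w : ι → K) : (householder w)ᵀ * householder w = 1 := by
  have hsymm : (householder w)ᵀ = householder w := by simp [householder, transpose_vecMulVec]
  rw [hsymm]
  simp only [householder, sub_mul, mul_sub, one_mul, mul_one, smul_mul_smul,
    vecMulVec_mul_vecMulVec]
  rw [vecMulVec_smul, smul_smul]
  field_simp
  module

lemma exists_transpose_mul_self_eq_one_sub_vecMulVec {k : ℕ} (u : Fin (k + 1) → ℚ)
    (hu : u ⬝ᵥ u = 1) :
    ∃ P : Matrix (Fin k) (Fin (k + 1)) ℚ, Pᵀ * P = 1 - vecMulVec u u := by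
  obtain ⟨σ, hσ, hσu⟩ : ∃ σ : ℚ, σ ^ 2 = 1 ∧ 0 ≤ σ * u 0 := by
    rcases le_total 0 (u 0) with h | h
    · exact ⟨1, by norm_num, by simpa⟩
    · exact ⟨-1, by norm_num, by simpa⟩
  set w := u + σ • Pi.single 0 1
  have hw : w ⬝ᵥ w = 2 * (1 + σ * u 0) := by
    simp only [w, add_dotProduct, dotProduct_add, dotProduct_smul, smul_dotProduct,
      dotProduct_single, single_dotProduct, hu]
    simp only [one_mul, smul_eq_mul, Pi.add_apply, Pi.smul_apply, Pi.single_eq_same, mul_one]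
    linear_combination hσ
  -- the reflection swaps `u` and `-σ e₀`
  set H := householder w
  have hH : Hᵀ * H = 1 := transpose_mul_householder w
  have hH0 : H 0 = -σ • u := by
    ext j
    simp only [H, householder, Matrix.sub_apply, Matrix.smul_apply, vecMulVec_apply, hw,
      smul_eq_mul, Pi.smul_apply]
    simp only [w, one_apply, Pi.add_apply, Pi.smul_apply, Pi.single_apply, smul_eq_mul]
    field_simp
    rcases eq_or_ne j 0 with rfl | hj
    · simp only [if_true]
      linear_combination (u 0 ^ 2 - 1) * hσ
    · simp only [hj, hj.symm, if_true, if_false]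
      linear_combination (u j * u 0) * hσ
  refine ⟨H.submatrix Fin.succ id, ?_⟩
  have hσσ : vecMulVec (-σ • u) (-σ • u) = vecMulVec u u := by
    ext i j
    simp only [vecMulVec_apply, Pi.smul_apply, smul_eq_mul]
    linear_combination (u i * u j) * hσ
  have hsplit := transpose_mul_self_eq_vecMulVec_add H
  rw [hH, hH0, hσσ] at hsplit
  rw [hsplit]
  abel

lemma exists_transpose_mul_self_eq_one_sub {j k : ℕ} (U : Matrix (Fin j) (Fin (k + j)) ℚ)
    (hU : U * Uᵀ = 1) : ∃ P : Matrix (Fin k) (Fin (k + j)) ℚ, Pᵀ * P = 1 - Uᵀ * U := by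
  -- the rows of `P` complete the orthonormal rows of `U` to an orthonormal basis
  induction j with
  | zero =>
    have hU0 : Uᵀ * U = 0 := by ext; simp [mul_apply]
    exact ⟨1, by rw [hU0]; simp⟩
  | succ j ih =>
    set u := U 0
    set V := U.submatrix Fin.succ id
    have hu : u ⬝ᵥ u = 1 := by simpa [mul_apply'] using congrFun (congrFun hU 0) 0
    have hVu : V *ᵥ u = 0 := by
      ext i
      have h := congrFun (congrFun hU i.succ) 0
      rwa [mul_apply', one_apply_ne (Fin.succ_ne_zero i)] at h
    have hV : V * Vᵀ = 1 := by
      rw [transpose_submatrix, ← submatrix_mul _ _ _ _ _ Function.bijective_id, hU,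
        submatrix_one _ (Fin.succ_injective _)]
    obtain ⟨P₁, hP₁⟩ := exists_transpose_mul_self_eq_one_sub_vecMulVec u hu
    have hfix : P₁ᵀ * P₁ * Vᵀ = Vᵀ := by
      rw [hP₁, Matrix.sub_mul, Matrix.one_mul, vecMulVec_mul, vecMul_transpose, hVu,
        sub_eq_self]
      ext
      simp [vecMulVec_apply]
    obtain ⟨P₂, hP₂⟩ := ih (V * P₁ᵀ) (by
      rw [transpose_mul, transpose_transpose, Matrix.mul_assoc, ← Matrix.mul_assoc P₁ᵀ, hfix,
        hV])
    refine ⟨P₂ * P₁, ?_⟩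
    calc (P₂ * P₁)ᵀ * (P₂ * P₁) = P₁ᵀ * (P₂ᵀ * P₂) * P₁ := by
          simp only [transpose_mul, Matrix.mul_assoc]
      _ = P₁ᵀ * P₁ - (P₁ᵀ * P₁ * Vᵀ) * (P₁ᵀ * P₁ * Vᵀ)ᵀ := by
          simp only [hP₂, transpose_mul, transpose_transpose, Matrix.mul_assoc, Matrix.mul_sub,
            Matrix.sub_mul, Matrix.mul_one]
      _ = 1 - Uᵀ * U := by
          rw [hfix, hP₁, transpose_mul_self_eq_vecMulVec_add U, transpose_transpose]
          abel

lemma HasOrthogonalFrame.cancel {m k j : ℕ} {c : ℚ} (hA : HasOrthogonalFrame (m + j) (k + j) c)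
    (hB : HasOrthogonalFrame j j c) (hc : c ≠ 0) : HasOrthogonalFrame m k c := by
  obtain ⟨B, hB⟩ := hB
  obtain ⟨A, hA⟩ := hA
  have hgram {p q : ℕ} (e₁ : Fin p → Fin (m + j)) (e₂ : Fin q → Fin (m + j)) :
      A.submatrix e₁ id * (A.submatrix e₂ id)ᵀ =
        c • (1 : Matrix (Fin (m + j)) (Fin (m + j)) ℚ).submatrix e₁ e₂ := by
    rw [transpose_submatrix, ← submatrix_mul _ _ _ _ _ Function.bijective_id, hA]
    rfl
  set X := A.submatrix (Fin.castAdd j) id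
  set Y := A.submatrix (Fin.natAdd m) id
  have hX : X * Xᵀ = c • 1 := by rw [hgram, submatrix_one _ (Fin.castAdd_injective m j)]
  have hY : Y * Yᵀ = c • 1 := by rw [hgram, submatrix_one _ (Fin.natAdd_injective j m)]
  have hXY : X * Yᵀ = 0 := by
    rw [hgram]
    ext a b
    rw [Matrix.smul_apply, submatrix_apply, one_apply_ne, smul_zero, Matrix.zero_apply]
    exact Fin.ne_of_val_ne (by simp only [Fin.val_castAdd, Fin.val_natAdd]; omega)
  -- the rows of `B * Y` are orthogonal of norm `c ^ 2`, so rescaling gives orthonormal rows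
  set U := c⁻¹ • (B * Y)
  have hU : U * Uᵀ = 1 := by
    rw [transpose_smul, transpose_mul, Matrix.smul_mul, Matrix.mul_smul, Matrix.mul_assoc,
      ← Matrix.mul_assoc Y, hY, Matrix.smul_mul, Matrix.one_mul, Matrix.mul_smul, hB, smul_smul,
      smul_smul, smul_smul]
    convert one_smul ℚ (1 : Matrix (Fin j) (Fin j) ℚ)
    field_simp
  have hXU : X * Uᵀ = 0 := by
    rw [transpose_smul, Matrix.mul_smul, transpose_mul, ← Matrix.mul_assoc, hXY, Matrix.zero_mul,
      smul_zero]
  obtain ⟨P, hP⟩ := exists_transpose_mul_self_eq_one_sub U hU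
  refine ⟨X * Pᵀ, ?_⟩
  calc X * Pᵀ * (X * Pᵀ)ᵀ = X * (Pᵀ * P) * Xᵀ := by
        simp only [transpose_mul, transpose_transpose, Matrix.mul_assoc]
    _ = X * Xᵀ - (X * Uᵀ) * (X * Uᵀ)ᵀ := by
        simp only [hP, transpose_mul, transpose_transpose, Matrix.mul_assoc, Matrix.mul_sub,
          Matrix.sub_mul, Matrix.mul_one]
    _ = c • 1 := by rw [hXU, hX, Matrix.zero_mul, sub_zero]

lemma hasCliqueQ_of_hasOrthogonalFrame {n : ℕ} (h : HasOrthogonalFrame (n + 1) (n + 1) (n + 1)) :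
    hasCliqueQ n (n + 1) (2 * (n + 1)) := by
  obtain ⟨A, hA⟩ := h
  have hrow := dotProduct_eq_of_mul_transpose_eq_smul_one hA
  have hN : (n + 1 : ℚ) ≠ 0 := by positivity
  -- a unit vector with `A i ⬝ᵥ u = 1` for every row; projecting it away keeps row differences
  set u := (n + 1 : ℚ)⁻¹ • (Aᵀ *ᵥ 1)
  have hAu' : A *ᵥ u = 1 := by
    rw [mulVec_smul, mulVec_mulVec, hA, smul_mulVec, one_mulVec, smul_smul, inv_mul_cancel₀ hN,
      one_smul]
  have hAu (i) : A i ⬝ᵥ u = 1 := congrFun hAu' i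
  have hu : u ⬝ᵥ u = 1 := by
    calc u ⬝ᵥ u = (n + 1 : ℚ)⁻¹ * (1 ⬝ᵥ (A *ᵥ u)) := by
          rw [dotProduct_mulVec, ← mulVec_transpose]
          exact smul_dotProduct _ _ _
      _ = 1 := by simp [hAu', hN]
  obtain ⟨P, hP⟩ := exists_transpose_mul_self_eq_one_sub_vecMulVec u hu
  have hPdot (x y) : (P *ᵥ x) ⬝ᵥ (P *ᵥ y) = x ⬝ᵥ y - (x ⬝ᵥ u) * (y ⬝ᵥ u) := by
    rw [dotProduct_mulVec, ← mulVec_transpose, mulVec_mulVec, hP, sub_mulVec, one_mulVec,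
      vecMulVec_mulVec, sub_dotProduct]
    simp [dotProduct_comm u]
  refine hasCliqueQ_iff.2 ⟨fun i => P *ᵥ A i, fun i j hij => ?_⟩
  simp only [← mulVec_sub, hPdot, sub_dotProduct, dotProduct_sub, hAu, hrow, hij, hij.symm,
    if_true, if_false]
  ring

lemma two_mul_card_mul_dotProduct_of_sum_eq_zero {N n : ℕ} {d : ℚ} {s : Fin N → Fin n → ℚ}
    (hs : ∀ i j, i ≠ j → (s i - s j) ⬝ᵥ (s i - s j) = d) (hsum : ∑ i, s i = 0)
    (i j : Fin N) :
    2 * N * (s i ⬝ᵥ s j) = d * ((if i = j then (N : ℚ) else 0) - 1) := by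
  have hD (i j : Fin N) : (s i - s j) ⬝ᵥ (s i - s j) = d - if i = j then d else 0 := by
    split_ifs with h
    · simp [h]
    · simpa using hs i j h
  set S := ∑ j, s j ⬝ᵥ s j
  have hrow (i : Fin N) : N * (s i ⬝ᵥ s i) + S = (N - 1) * d := by
    have h0 : ∑ j, 2 * (s i ⬝ᵥ s j) = 0 := by
      rw [← Finset.mul_sum, ← dotProduct_sum, hsum, dotProduct_zero, mul_zero]
    simp only [two_mul_dotProduct, hD, Finset.sum_sub_distrib, Finset.sum_add_distrib,
      Finset.sum_const, Finset.sum_ite_eq, Finset.mem_univ, if_true, Finset.card_univ,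
      Fintype.card_fin, nsmul_eq_mul] at h0
    linear_combination h0
  have hN : (N : ℚ) ≠ 0 := by have := i.pos; positivity
  have hS : 2 * S = (N - 1) * d := by
    have h := Finset.sum_congr rfl fun i (_ : i ∈ Finset.univ) => hrow i
    simp only [Finset.sum_add_distrib, ← Finset.mul_sum, Finset.sum_const, Finset.card_univ,
      Fintype.card_fin, nsmul_eq_mul] at h
    exact mul_left_cancel₀ hN (by linear_combination h)
  have hpolar := two_mul_dotProduct (s i) (s j)
  rw [hD] at hpolar
  split_ifs at hpolar ⊢ <;> linear_combination N * hpolar + hrow i + hrow j - hS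

lemma hasOrthogonalFrame_of_hasCliqueQ {n : ℕ} (hn : Odd n) {d : ℚ} (hd : 0 < d)
    (h : hasCliqueQ n (n + 1) d) : HasOrthogonalFrame (n + 1) (n + 1) (n + 1) := by
  obtain ⟨r, hr⟩ := isSquare_of_hasCliqueQ h
  obtain ⟨p, hp⟩ := hasCliqueQ_iff.1 h
  have hN : (n + 1 : ℚ) ≠ 0 := by positivity
  -- since `n` is odd, `(d / 2) * (n + 1)` is a rational square, so rescaling by `l` is possible
  obtain ⟨l, hl⟩ : ∃ l : ℚ, l ^ 2 * (d / 2) = n + 1 := by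
    obtain ⟨k, hk⟩ := hn
    have he : ((d / 2) ^ k) ^ 2 * (d / 2) * (n + 1) = r * r := by
      rw [← hr, hk]
      ring
    have hr0 : r ≠ 0 := by
      rintro rfl
      have : ((d / 2) ^ k) ^ 2 * (d / 2) * (n + 1) ≠ 0 := by positivity
      exact this (he.trans (zero_mul 0))
    refine ⟨(n + 1) * (d / 2) ^ k / r, ?_⟩
    field_simp
    linear_combination 2 * he
  set s : Fin (n + 1) → Fin n → ℚ := fun i => p i - (n + 1 : ℚ)⁻¹ • ∑ j, p j
  have hsum : ∑ i, s i = 0 := by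
    rw [Finset.sum_sub_distrib, Finset.sum_const, Finset.card_univ, Fintype.card_fin,
      ← Nat.cast_smul_eq_nsmul ℚ, smul_smul]
    push_cast
    rw [mul_inv_cancel₀ hN, one_smul, sub_self]
  have hs := two_mul_card_mul_dotProduct_of_sum_eq_zero (s := s)
    (fun i j hij => by simpa [s] using hp i j hij) hsum
  refine ⟨of fun i => vecCons 1 (l • s i), ?_⟩
  ext i j
  rw [mul_apply']
  change vecCons 1 (l • s i) ⬝ᵥ vecCons 1 (l • s j) = _
  rw [cons_dotProduct_cons, dotProduct_smul, smul_dotProduct, Matrix.smul_apply, one_apply]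
  have hij := hs i j
  push_cast at hij
  apply mul_left_cancel₀ hN
  simp only [smul_eq_mul] at hij ⊢
  split_ifs at hij ⊢
  · linear_combination (l ^ 2 / 2) * hij + (n : ℚ) * hl
  · linear_combination (l ^ 2 / 2) * hij - hl

lemma hasSimplexQ_succ_of_hasOrthogonalFrame {n : ℕ}
    (h : HasOrthogonalFrame (n + 1) (n + 1) (n + 1)) : hasSimplexQ n (n + 1) :=
  ⟨_, by positivity, hasCliqueQ_of_hasOrthogonalFrame h⟩

lemma hasSimplexQ_succ_iff_of_even {n : ℕ} (hn : Even n) :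
    hasSimplexQ n (n + 1) ↔ ∃ c : ℕ, n + 1 = c ^ 2 := by
  constructor
  · rintro ⟨d, hd, h⟩
    obtain ⟨r, hr⟩ := isSquare_of_hasCliqueQ h
    obtain ⟨k, rfl⟩ := hn
    have hsq : IsSquare ((k + k + 1 : ℕ) : ℚ) := ⟨r / (d / 2) ^ k, by
      push_cast at hr ⊢
      field_simp
      linear_combination hr⟩
    obtain ⟨c, hc⟩ := Rat.isSquare_natCast_iff.1 hsq
    exact ⟨c, by rw [hc, sq]⟩
  · rintro ⟨c, hc⟩
    apply hasSimplexQ_succ_of_hasOrthogonalFrame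
    have hcq : (n + 1 : ℚ) = (c : ℚ) ^ 2 := by exact_mod_cast hc
    rw [hcq]
    exact hasOrthogonalFrame_sq _ _

lemma hasSimplexQ_succ_iff_of_odd {n : ℕ} (hn : Odd n) :
    hasSimplexQ n (n + 1) ↔ HasOrthogonalFrame (n + 1) (n + 1) (n + 1) :=
  ⟨fun ⟨_, hd, h⟩ => hasOrthogonalFrame_of_hasCliqueQ hn hd h,
    hasSimplexQ_succ_of_hasOrthogonalFrame⟩

lemma hasOrthogonalFrame_self_iff_of_mod_four_eq_two {N : ℕ} (hN : N % 4 = 2) :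
    HasOrthogonalFrame N N N ↔ ∃ a b : ℤ, (N : ℤ) = a ^ 2 + b ^ 2 := by
  obtain ⟨t, rfl⟩ : ∃ t, N = 2 + 4 * t := ⟨N / 4, by omega⟩
  constructor
  · intro h
    obtain ⟨A, hA⟩ := h.cancel (m := 2) (k := 2)
      (hasOrthogonalFrame_of_four_dvd (dvd_mul_right 4 t) _) (by positivity)
    have h00 := dotProduct_eq_of_mul_transpose_eq_smul_one hA 0 0
    simp only [dotProduct, Fin.sum_univ_two, if_true] at h00
    exact Int.exists_sq_add_sq_of_ratCast (x := A 0 0) (y := A 0 1) (by rw [← h00]; ring)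
  · rintro ⟨a, b, hab⟩
    have hq : ((2 + 4 * t : ℕ) : ℚ) = (a : ℚ) ^ 2 + (b : ℚ) ^ 2 := by exact_mod_cast hab
    rw [hq, show 2 + 4 * t = (1 + 2 * t) * 2 by ring]
    exact (hasOrthogonalFrame_sq_add_sq _ _).mul_left _

end Schoenberg

open Schoenberg

theorem stmt_14_general (n : ℕ) :
    hasSimplexQ n n ∧ ¬ hasSimplexQ n (n + 2) ∧
      (hasSimplexQ n (n + 1) ↔
        ((Even n ∧ ∃ c : ℕ, n + 1 = c ^ 2) ∨ n % 4 = 3 ∨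
          (n % 4 = 1 ∧ ∃ a b : ℤ, (n : ℤ) + 1 = a ^ 2 + b ^ 2))) := by
  refine ⟨hasSimplexQ_self n, fun ⟨_, hd, h⟩ => not_hasCliqueQ_add_two hd h, ?_⟩
  rcases Nat.even_or_odd n with hn | hn
  · have : n % 4 ≠ 3 ∧ n % 4 ≠ 1 := by obtain ⟨k, rfl⟩ := hn; omega
    simp [hasSimplexQ_succ_iff_of_even hn, hn, this]
  · have hne : ¬ Even n := Nat.not_even_iff_odd.2 hn
    rw [hasSimplexQ_succ_iff_of_odd hn]
    rcases (by obtain ⟨k, rfl⟩ := hn; omega : n % 4 = 1 ∨ n % 4 = 3) with h1 | h3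
    · have hiff := hasOrthogonalFrame_self_iff_of_mod_four_eq_two (N := n + 1) (by omega)
      push_cast at hiff
      simp [hiff, hne, h1]
    · simpa [h3] using hasOrthogonalFrame_of_four_dvd (by omega) (n + 1)

/-- Schoenberg's theorem: for every positive `n`, the maximal number `C₁(ℚⁿ)` of
pairwise equidistant points of `ℚⁿ` is `n` or `n + 1`, and it equals `n + 1` exactly
when (i) `n` is even and `n+1` is a perfect square, or (ii) `n ≡ 3 (mod 4)`, or
(iii) `n ≡ 1 (mod 4)` and `n+1` is a sum of two integer squares. -/
theorem stmt_14 (n : ℕ) (hn : 0 < n) :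
    hasSimplexQ n n ∧ ¬ hasSimplexQ n (n + 2) ∧
      (hasSimplexQ n (n + 1) ↔
        ((Even n ∧ ∃ c : ℕ, n + 1 = c ^ 2) ∨ n % 4 = 3 ∨
          (n % 4 = 1 ∧ ∃ a b : ℤ, (n : ℤ) + 1 = a ^ 2 + b ^ 2))) :=
  stmt_14_general n
end

section
/- For n ≡ 3 (mod 4), every clique of size n-3 in the distance-√r graph on ℚⁿ extends: if P₁, …, P_{n-3} ∈ ℚⁿ are pairwise at distance √r (r a positive integer), then there exists P ∈ ℚⁿ at distance √r from each Pᵢ. Consequently ω(ℚⁿ, √r) ≥ n - 2, and C₁(ℚⁿ) - c₁(ℚⁿ) ≤ 3. -/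
/-- `d` (as a squared distance) is realized between points of `ℚⁿ`. -/
def realizedQ (n : ℕ) (d : ℚ) : Prop :=
  0 < d ∧ ∃ p q : Fin n → ℚ, ∑ k, (p k - q k) ^ 2 = d

/-- The clique number `ω(ℚⁿ, √d)` (with `d` the squared distance). -/
noncomputable def omegaQ (n : ℕ) (d : ℚ) : ℕ := sSup {m | hasCliqueQ n m d}

/-- `C₁(ℚⁿ)`: the maximum of `ω(ℚⁿ, √d)` over realized squared distances `d`. -/
noncomputable def C1Q (n : ℕ) : ℕ := sSup {m | ∃ d, realizedQ n d ∧ hasCliqueQ n m d}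

/-- `c₁(ℚⁿ)`: the minimum of `ω(ℚⁿ, √d)` over realized squared distances `d`. -/
noncomputable def c1Q (n : ℕ) : ℕ := sInf {k | ∃ d, realizedQ n d ∧ omegaQ n d = k}

open Finset

section DotProduct

variable {K ι : Type*} [Fintype ι]

lemma sum_sub_sq_eq_dotProduct [CommRing K] (x y : ι → K) :
    ∑ k, (x k - y k) ^ 2 = (x - y) ⬝ᵥ (x - y) := by
  simp [dotProduct, sq]

lemma sub_dotProduct_sub_self [CommRing K] (x y : ι → K) :
    (x - y) ⬝ᵥ (x - y) = x ⬝ᵥ x - 2 * (x ⬝ᵥ y) + y ⬝ᵥ y := by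
  rw [sub_dotProduct, dotProduct_sub, dotProduct_sub, dotProduct_comm y x]; ring

variable [Field K]

def dotReflection (d x : ι → K) : ι → K := x - (2 * (x ⬝ᵥ d) / (d ⬝ᵥ d)) • d

lemma dotReflection_dotProduct {d : ι → K} (hd : d ⬝ᵥ d ≠ 0) (x y : ι → K) :
    dotReflection d x ⬝ᵥ dotReflection d y = x ⬝ᵥ y := by
  simp only [dotReflection, sub_dotProduct, dotProduct_sub, smul_dotProduct, dotProduct_smul,
    smul_eq_mul, dotProduct_comm d y]
  field_simp
  ring

lemma dotReflection_of_dotProduct_eq_zero {d x : ι → K} (h : x ⬝ᵥ d = 0) :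
    dotReflection d x = x := by
  simp [dotReflection, h]

variable [LinearOrder K] [IsStrictOrderedRing K]

lemma dotReflection_sub_self {a b : ι → K} (hab : a ≠ b) (h : a ⬝ᵥ a = b ⬝ᵥ b) :
    dotReflection (a - b) a = b := by
  have hd : (a - b) ⬝ᵥ (a - b) ≠ 0 := fun h0 => hab (sub_eq_zero.mp (dotProduct_self_eq_zero.mp h0))
  have : 2 * (a ⬝ᵥ (a - b)) = (a - b) ⬝ᵥ (a - b) := by
    rw [sub_dotProduct_sub_self, dotProduct_sub, h]; ring
  rw [dotReflection, this, div_self hd, one_smul, sub_sub_cancel]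

/-- Witt's extension theorem for the (anisotropic) standard form. -/
theorem exists_dotProduct_preserving_of_gram_eq {N : ℕ} (u v : Fin N → ι → K)
    (h : ∀ i j, u i ⬝ᵥ u j = v i ⬝ᵥ v j) :
    ∃ f : (ι → K) → ι → K, (∀ x y, f x ⬝ᵥ f y = x ⬝ᵥ y) ∧ ∀ i, f (u i) = v i := by
  induction N with
  | zero => exact ⟨id, fun _ _ => rfl, fun i => i.elim0⟩
  | succ N ih =>
    obtain ⟨f, hf, hfu⟩ := ih (fun i => u i.castSucc) (fun i => v i.castSucc)
      fun i j => h i.castSucc j.castSucc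
    set a := f (u (Fin.last N))
    set b := v (Fin.last N)
    by_cases hab : a = b
    · exact ⟨f, hf, Fin.lastCases hab hfu⟩
    have hperp : ∀ i : Fin N, v i.castSucc ⬝ᵥ (a - b) = 0 := fun i => by
      rw [dotProduct_sub, sub_eq_zero]
      calc v i.castSucc ⬝ᵥ a = u i.castSucc ⬝ᵥ u (Fin.last N) := by rw [← hfu i, hf]
        _ = v i.castSucc ⬝ᵥ b := h _ _
    refine ⟨dotReflection (a - b) ∘ f, fun x y => ?_, Fin.lastCases ?_ fun i => ?_⟩
    · have hd : (a - b) ⬝ᵥ (a - b) ≠ 0 :=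
        fun h0 => hab (sub_eq_zero.mp (dotProduct_self_eq_zero.mp h0))
      simp only [Function.comp_apply, dotReflection_dotProduct hd, hf]
    · exact dotReflection_sub_self hab (by rw [hf, h])
    · simp only [Function.comp_apply, hfu i, dotReflection_of_dotProduct_eq_zero (hperp i)]

end DotProduct

section Equilateral

variable {K ι κ : Type*} [Field K] [Fintype ι]

def IsEquilateral (p : κ → ι → K) (d : K) : Prop :=
  ∀ i j, i ≠ j → (p i - p j) ⬝ᵥ (p i - p j) = d

lemma IsEquilateral.smul {p : κ → ι → K} {d : K} (hp : IsEquilateral p d) (c : K) :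
    IsEquilateral (c • p) (c ^ 2 * d) := fun i j hij => by
  rw [Pi.smul_apply, Pi.smul_apply, ← smul_sub, smul_dotProduct, dotProduct_smul, hp i j hij,
    smul_eq_mul, smul_eq_mul, sq, mul_assoc]

variable [LinearOrder K] [IsStrictOrderedRing K]

lemma IsEquilateral.dotProduct_sub_sub [DecidableEq κ] {p : κ → ι → K} {d : K}
    (hp : IsEquilateral p d) (z i j : κ) :
    (p i - p z) ⬝ᵥ (p j - p z) = if i = z ∨ j = z then 0 else if i = j then d else d / 2 := by
  by_cases hi : i = z
  · simp [hi]
  by_cases hj : j = z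
  · simp [hj]
  by_cases hij : i = j
  · subst hij
    simp [hi, hp i z hi]
  have hdiff : (p i - p z) - (p j - p z) = p i - p j := by abel
  have := sub_dotProduct_sub_self (p i - p z) (p j - p z)
  rw [hdiff, hp i j hij, hp i z hi, hp j z hj] at this
  simp only [hi, hj, hij, or_self, if_false]
  linear_combination this / 2

/-- The Witt extension of the correspondence between `P` and the first `M` vertices of `C`
carries the last vertex of `C` to the required point. -/
theorem IsEquilateral.exists_extension {M : ℕ}
    (hM : 0 < M) {d : K} {C : Fin (M + 1) → ι → K} (hC : IsEquilateral C d)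
    {P : Fin M → ι → K} (hP : IsEquilateral P d) :
    ∃ Q : ι → K, ∀ i, (Q - P i) ⬝ᵥ (Q - P i) = d := by
  let z : Fin M := ⟨0, hM⟩
  obtain ⟨f, hf, hfu⟩ := exists_dotProduct_preserving_of_gram_eq
    (fun i => C i.castSucc - C z.castSucc) (fun i => P i - P z) fun i j => by
      simp only [hC.dotProduct_sub_sub, hP.dotProduct_sub_sub, Fin.castSucc_inj]
  refine ⟨P z + f (C (Fin.last M) - C z.castSucc), fun i => ?_⟩
  have hsub : P z + f (C (Fin.last M) - C z.castSucc) - P i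
      = f (C (Fin.last M) - C z.castSucc) - f (C i.castSucc - C z.castSucc) := by
    rw [hfu i]; abel
  rw [hsub, sub_dotProduct_sub_self, hf, hf, hf, ← sub_dotProduct_sub_self,
    sub_sub_sub_cancel_right]
  exact hC _ _ (Fin.castSucc_lt_last i).ne'

/-- The differences `p i - p 0` are linearly independent, since their Gram matrix is
`d / 2 • (1 + J)`. -/
theorem IsEquilateral.le_card_add_one {M : ℕ} {d : K}
    (hd : 0 < d) {p : Fin M → ι → K} (hp : IsEquilateral p d) : M ≤ Fintype.card ι + 1 := by
  obtain _ | M := M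
  · omega
  let v : Fin M → ι → K := fun i => p i.succ - p 0
  have hv : ∀ i j, v i ⬝ᵥ v j = d / 2 + if i = j then d / 2 else 0 := fun i j => by
    simp only [v, hp.dotProduct_sub_sub, Fin.succ_ne_zero, or_self, if_false, Fin.succ_inj]
    split_ifs <;> ring
  have hli : LinearIndependent K v := by
    rw [Fintype.linearIndependent_iff]
    intro g hg
    have hgj : ∀ j, g j = -∑ i, g i := fun j => by
      have h0 : (∑ i, g i • v i) ⬝ᵥ v j = d / 2 * ((∑ i, g i) + g j) := by
        simp only [sum_dotProduct, smul_dotProduct, hv, smul_eq_mul, mul_add, mul_ite, mul_zero,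
          sum_add_distrib, sum_ite_eq', mem_univ, if_true, ← sum_mul]
        ring
      rw [hg, zero_dotProduct] at h0
      have := (mul_eq_zero.mp h0.symm).resolve_left (by positivity)
      linarith
    have hsum : (M + 1 : K) * ∑ i, g i = 0 := by
      have := Finset.sum_congr rfl fun j (_ : j ∈ univ) => hgj j
      rw [sum_const, card_univ, Fintype.card_fin, nsmul_eq_mul] at this
      linear_combination this
    have hsum0 : ∑ i, g i = 0 := (mul_eq_zero.mp hsum).resolve_left (by positivity)
    intro j
    rw [hgj j, hsum0, neg_zero]
  simpa using hli.fintype_card_le_finrank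

end Equilateral

section Simplex

variable {K ι P : Type*} [Field K] [Fintype ι] [Fintype P] [DecidableEq P]

/-- `hc` says that `W p + (c • ∑ p', W p' + t)` has square length `2 * q`, the square distance
between two distinct `W p`. -/
lemma isEquilateral_orthogonal_translate {W : P → ι → K} {q : K}
    (hW : ∀ p p', W p ⬝ᵥ W p' = if p = p' then q else 0) {t : ι → K}
    (ht : ∀ p, W p ⬝ᵥ t = 0) {c : K}
    (hc : q + 2 * c * q + c ^ 2 * (Fintype.card P * q) + t ⬝ᵥ t = 2 * q) :
    IsEquilateral (fun o : Option P => o.elim 0 fun p => W p + (c • ∑ p', W p' + t)) (2 * q) := by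
  set τ := c • ∑ p', W p' + t with hτ
  have hWτ : ∀ p, W p ⬝ᵥ τ = c * q := fun p => by
    simp [hτ, dotProduct_add, dotProduct_sum, hW, ht]
  have htτ : t ⬝ᵥ τ = t ⬝ᵥ t := by
    rw [hτ, dotProduct_add, dotProduct_smul, dotProduct_sum]
    simp [dotProduct_comm t, ht]
  have hττ : τ ⬝ᵥ τ = c ^ 2 * (Fintype.card P * q) + t ⬝ᵥ t := by
    conv_lhs => arg 1; rw [hτ]
    simp only [add_dotProduct, smul_dotProduct, sum_dotProduct, hWτ, htτ, sum_const, card_univ,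
      nsmul_eq_mul, smul_eq_mul]
    ring
  clear_value τ
  have hnorm : ∀ p, (W p + τ) ⬝ᵥ (W p + τ) = 2 * q := fun p => by
    rw [← hc, add_dotProduct, dotProduct_add, dotProduct_add, dotProduct_comm τ, hWτ, hW,
      if_pos rfl, hττ]
    ring
  rintro (_ | p) (_ | p') hne
  · exact absurd rfl hne
  · simpa only [Option.elim, zero_sub, neg_dotProduct_neg] using hnorm p'
  · simpa only [Option.elim, sub_zero] using hnorm p
  · have hpp : p ≠ p' := fun h => hne (congrArg some h)
    simp only [Option.elim, add_sub_add_right_eq_sub, sub_dotProduct_sub_self, hW, if_neg hpp,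
      if_true]
    ring

end Simplex

lemma dotProduct_blockwise {K σ ι : Type*} [CommRing K] [Fintype σ] [Fintype ι] [DecidableEq σ]
    (u v : ι → K) (s s' : σ) :
    (fun x : ι × σ => if x.2 = s then u x.1 else 0) ⬝ᵥ (fun x => if x.2 = s' then v x.1 else 0)
      = if s = s' then u ⬝ᵥ v else 0 := by
  simp only [dotProduct, Fintype.sum_prod_type, ite_mul, zero_mul, mul_ite, mul_zero]
  split_ifs with h
  · subst h; simp [Finset.sum_ite_eq']
  · simp [Ne.symm h]

/-- The rows of the matrix of left multiplication by the quaternion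
`h 0 + h 1 i + h 2 j + h 3 k`. -/
def quaternionRows {R : Type*} [Neg R] (h : Fin 4 → R) : Fin 4 → Fin 4 → R :=
  ![![h 0, h 1, h 2, h 3], ![-h 1, h 0, h 3, -h 2], ![-h 2, -h 3, h 0, h 1],
    ![-h 3, h 2, -h 1, h 0]]

lemma quaternionRows_dotProduct {R : Type*} [CommRing R] (h : Fin 4 → R) (a b : Fin 4) :
    quaternionRows h a ⬝ᵥ quaternionRows h b = if a = b then h ⬝ᵥ h else 0 := by
  fin_cases a <;> fin_cases b <;> simp [quaternionRows, dotProduct, Fin.sum_univ_four] <;> ring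

/-- The halving comes from `((a + b) / 2) ^ 2 + ((a - b) / 2) ^ 2 = (a ^ 2 + b ^ 2) / 2`. -/
lemma exists_orthogonal_rows_half (r : ℕ) :
    ∃ H : Fin 4 → Fin 4 → ℚ, ∀ a b, H a ⬝ᵥ H b = if a = b then (r : ℚ) / 2 else 0 := by
  obtain ⟨a, b, c, d, habcd⟩ := Nat.sum_four_squares r
  refine ⟨quaternionRows ![(a + b) / 2, (a - b) / 2, (c + d) / 2, (c - d) / 2], fun i j => ?_⟩
  rw [quaternionRows_dotProduct, ← habcd]
  simp only [dotProduct, Fin.sum_univ_four]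
  push_cast
  split_ifs <;> ring

lemma exists_isEquilateral_of_simplex_sol {m r : ℕ} {c : ℚ} {t : Fin 3 → ℚ}
    (h : 2 * r * m * c ^ 2 + r * c + t ⬝ᵥ t = r / 2) :
    ∃ p : Option (Fin 4 × Fin m) → (Fin 4 × Fin m) ⊕ Fin 3 → ℚ, IsEquilateral p r := by
  obtain ⟨H, hH⟩ := exists_orthogonal_rows_half r
  let W : Fin 4 × Fin m → (Fin 4 × Fin m) ⊕ Fin 3 → ℚ := fun p =>
    Sum.elim (fun x => if x.2 = p.2 then H p.1 x.1 else 0) 0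
  have hW : ∀ p p', W p ⬝ᵥ W p' = if p = p' then (r : ℚ) / 2 else 0 := by
    rintro ⟨a, s⟩ ⟨a', s'⟩
    simp only [W, sumElim_dotProduct_sumElim, dotProduct_blockwise, hH, dotProduct_zero, add_zero,
      Prod.mk.injEq]
    split_ifs <;> simp_all
  have ht : ∀ p, W p ⬝ᵥ Sum.elim 0 t = 0 := fun p => by
    simp [W, sumElim_dotProduct_sumElim]
  have := isEquilateral_orthogonal_translate hW ht (c := c) (by
    simp only [sumElim_dotProduct_sumElim, dotProduct_zero, zero_add, Fintype.card_prod,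
      Fintype.card_fin]
    push_cast
    linear_combination h)
  rw [mul_div_cancel₀ _ two_ne_zero] at this
  exact ⟨_, this⟩

lemma hasCliqueQ_iff {n M : ℕ} {d : ℚ} :
    hasCliqueQ n M d ↔ ∃ p : Fin M → Fin n → ℚ, IsEquilateral p d := by
  simp only [hasCliqueQ, IsEquilateral, sum_sub_sq_eq_dotProduct]

lemma IsEquilateral.hasCliqueQ {κ ι : Type*} [Fintype κ] [Fintype ι] {p : κ → ι → ℚ} {d : ℚ}
    (hp : IsEquilateral p d) : hasCliqueQ (Fintype.card ι) (Fintype.card κ) d := by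
  let e := Fintype.equivFin ι
  let f := Fintype.equivFin κ
  refine hasCliqueQ_iff.mpr ⟨fun i => p (f.symm i) ∘ e.symm, fun i j hij => ?_⟩
  rw [← Pi.sub_comp, comp_equiv_dotProduct_comp_equiv]
  exact hp _ _ (f.symm.injective.ne hij)

lemma Int.sq_lt_of_natAbs_le_sqrt {x : ℤ} {W : ℕ} (hW : ¬ IsSquare W) (hx : x.natAbs ≤ W.sqrt) :
    x ^ 2 < W := by
  rw [← Int.natAbs_sq]
  have hle : x.natAbs ^ 2 ≤ W := (Nat.pow_le_pow_left hx 2).trans (Nat.sqrt_le' W)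
  have hne : x.natAbs ^ 2 ≠ W := fun h => hW ⟨x.natAbs, by rw [← h, sq]⟩
  exact_mod_cast lt_of_le_of_ne hle hne

/-- Pigeonhole over the boxes `[0, √(Bn)] × [0, √n] × [0, √B]`, which have more than `Bn` points. -/
lemma exists_small_sol_congr (B n : ℕ) [NeZero B] [NeZero n] (ρ : ZMod B) :
    ∃ x y z : ℤ, ¬(x = 0 ∧ y = 0 ∧ z = 0) ∧ x.natAbs ≤ (B * n).sqrt ∧ y.natAbs ≤ n.sqrt ∧
      z.natAbs ≤ B.sqrt ∧ (x : ZMod n) = y ∧ (x : ZMod B) = ρ * z := by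
  let F : Fin ((B * n).sqrt + 1) × Fin (n.sqrt + 1) × Fin (B.sqrt + 1) → ZMod n × ZMod B :=
    fun a => ((a.1 : ZMod n) - (a.2.1 : ℕ), ((a.1 : ℕ) : ZMod B) - ρ * (a.2.2 : ℕ))
  have hcard : B * n < ((B * n).sqrt + 1) * ((n.sqrt + 1) * (B.sqrt + 1)) := by
    refine lt_of_pow_lt_pow_left₀ 2 (Nat.zero_le _) ?_
    calc (B * n) ^ 2 = (B * n) * (n * B) := by ring
      _ < ((B * n).sqrt + 1) ^ 2 * ((n.sqrt + 1) ^ 2 * (B.sqrt + 1) ^ 2) :=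
        Nat.mul_lt_mul'' (Nat.lt_succ_sqrt' _)
          (Nat.mul_lt_mul'' (Nat.lt_succ_sqrt' _) (Nat.lt_succ_sqrt' _))
      _ = _ := by ring
  obtain ⟨a, b, hab, hF⟩ := Fintype.exists_ne_map_eq_of_card_lt F
    (by simpa [mul_comm n B] using hcard)
  simp only [F, Prod.mk.injEq] at hF
  refine ⟨(a.1 : ℕ) - (b.1 : ℕ), (a.2.1 : ℕ) - (b.2.1 : ℕ), (a.2.2 : ℕ) - (b.2.2 : ℕ),
    fun h => hab ?_, ?_, ?_, ?_, ?_, ?_⟩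
  · ext <;> omega
  · have := a.1.isLt; have := b.1.isLt; omega
  · have := a.2.1.isLt; have := b.2.1.isLt; omega
  · have := a.2.2.isLt; have := b.2.2.isLt; omega
  · push_cast; linear_combination hF.1
  · push_cast; linear_combination hF.2

/-- Local conditions under which `x² + B y² = n z²` has a solution with `z ≠ 0`, a case of
Legendre's theorem on ternary quadratic forms. -/
structure LegendreData (n B : ℕ) : Prop where
  not_isSquare : ¬ IsSquare B
  not_isSquare_mul : ¬ IsSquare (B * n)
  coprime : B.Coprime n
  cast_eq_neg_one : (B : ZMod n) = -1
  isSquare_cast : IsSquare (n : ZMod B)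

/-- The small triple `(x, y, z)` has `x² + B y² - n z²` divisible by `Bn` and strictly between
`-Bn` and `2Bn`; the value `0` is a solution, and the value `Bn` is turned into the solution
`(xz + By, yz - x, z² + B)`. -/
theorem LegendreData.exists_sol {n B : ℕ} (h : LegendreData n B) (hn : ¬ IsSquare n) :
    ∃ x y z : ℤ, x ^ 2 + B * y ^ 2 = n * z ^ 2 ∧ z ≠ 0 := by
  have : NeZero B := ⟨by rintro rfl; exact h.not_isSquare ⟨0, rfl⟩⟩
  have : NeZero n := ⟨by rintro rfl; exact hn ⟨0, rfl⟩⟩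
  have hB0 : (0 : ℤ) < B := by exact_mod_cast Nat.pos_of_neZero B
  have hn0 : (0 : ℤ) < n := by exact_mod_cast Nat.pos_of_neZero n
  obtain ⟨ρ, hρ⟩ := h.isSquare_cast
  obtain ⟨x, y, z, hxyz, hx, hy, hz, hxy, hxz⟩ := exists_small_sol_congr B n ρ
  have hx2 := Int.sq_lt_of_natAbs_le_sqrt h.not_isSquare_mul hx
  have hy2 := Int.sq_lt_of_natAbs_le_sqrt hn hy
  have hz2 := Int.sq_lt_of_natAbs_le_sqrt h.not_isSquare hz
  have hdvd_n : (n : ℤ) ∣ x ^ 2 + B * y ^ 2 - n * z ^ 2 := by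
    rw [← ZMod.intCast_zmod_eq_zero_iff_dvd]
    push_cast
    rw [hxy, h.cast_eq_neg_one, ZMod.natCast_self]
    ring
  have hdvd_B : (B : ℤ) ∣ x ^ 2 + B * y ^ 2 - n * z ^ 2 := by
    rw [← ZMod.intCast_zmod_eq_zero_iff_dvd]
    push_cast
    rw [hxz, hρ, ZMod.natCast_self]
    ring
  obtain ⟨k, hk⟩ := IsCoprime.mul_dvd (Nat.isCoprime_iff_coprime.mpr h.coprime) hdvd_B hdvd_n
  have hBn : (0 : ℤ) < B * n := mul_pos hB0 hn0
  push_cast at hx2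
  have hk01 : k = 0 ∨ k = 1 := by
    have hlo : (B * n : ℤ) * -1 < B * n * k := by
      nlinarith [mul_lt_mul_of_pos_left hz2 hn0, sq_nonneg x, sq_nonneg y]
    have hhi : (B * n : ℤ) * k < B * n * 2 := by
      nlinarith [mul_lt_mul_of_pos_left hy2 hB0, sq_nonneg z]
    have := lt_of_mul_lt_mul_left hlo hBn.le
    have := lt_of_mul_lt_mul_left hhi hBn.le
    omega
  rcases hk01 with rfl | rfl
  · refine ⟨x, y, z, by linarith, fun hz0 => hxyz ⟨?_, ?_, hz0⟩⟩ <;>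
      subst hz0 <;> nlinarith [sq_nonneg x, sq_nonneg y]
  · exact ⟨x * z + B * y, y * z - x, z ^ 2 + B, by linear_combination (z ^ 2 + B) * hk,
      (add_pos_of_nonneg_of_pos (sq_nonneg z) hB0).ne'⟩

lemma Nat.Prime.not_isSquare_mul {p c : ℕ} (hp : p.Prime) (hc : ¬ p ∣ c) : ¬ IsSquare (p * c) := by
  rintro ⟨s, hs⟩
  obtain ⟨s', rfl⟩ : p ∣ s := hp.dvd_of_dvd_pow (n := 2) (by rw [sq, ← hs]; exact dvd_mul_right p c)
  exact hc ⟨s' * s', Nat.eq_of_mul_eq_mul_left hp.pos (by rw [hs]; ring)⟩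

lemma legendreData_prime {n ℓ : ℕ} (hℓ : ℓ.Prime) (hn0 : 0 < n) (hnℓ : n < ℓ)
    (hℓn : (ℓ : ZMod n) = -1) (hJ : jacobiSym n ℓ = 1) : LegendreData n ℓ := by
  have : Fact ℓ.Prime := ⟨hℓ⟩
  have hndvd : ¬ ℓ ∣ n := Nat.not_dvd_of_pos_of_lt hn0 hnℓ
  exact ⟨hℓ.prime.not_isSquare, hℓ.not_isSquare_mul hndvd, (hℓ.coprime_iff_not_dvd).mpr hndvd,
    hℓn, by exact_mod_cast ZMod.isSquare_of_jacobiSym_eq_one hJ⟩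

lemma legendreData_two_mul_prime {n ℓ : ℕ} (hℓ : ℓ.Prime) (hℓ2 : Odd ℓ) (hn : Odd n) (hnℓ : n < ℓ)
    (hℓn : (2 * ℓ : ZMod n) = -1) (hJ : jacobiSym n ℓ = 1) : LegendreData n (2 * ℓ) := by
  have : Fact ℓ.Prime := ⟨hℓ⟩
  have hndvd : ¬ ℓ ∣ n := Nat.not_dvd_of_pos_of_lt hn.pos hnℓ
  refine ⟨Nat.prime_two.not_isSquare_mul hℓ2.not_two_dvd_nat, ?_,
    (Nat.coprime_two_left.mpr hn).mul_left ((hℓ.coprime_iff_not_dvd).mpr hndvd),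
    by exact_mod_cast hℓn, ?_⟩
  · rw [mul_assoc]
    exact Nat.prime_two.not_isSquare_mul (hℓ2.mul hn).not_two_dvd_nat
  · let e := ZMod.chineseRemainder (Nat.coprime_two_left.mpr hℓ2)
    obtain ⟨a, ha⟩ : IsSquare (n : ZMod 2) := ⟨1, by rw [ZMod.natCast_eq_one_iff_odd.mpr hn]; rfl⟩
    obtain ⟨b, hb⟩ : IsSquare (n : ZMod ℓ) := by
      exact_mod_cast ZMod.isSquare_of_jacobiSym_eq_one hJ
    have : IsSquare (e n) := ⟨(a, b), by rw [map_natCast]; exact Prod.ext ha hb⟩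
    simpa using this.map e.symm

lemma exists_sq_add_sq_of_prime {ℓ : ℕ} (hℓ : ℓ.Prime) (h4 : ℓ % 4 = 1) :
    ∃ u v : ℤ, u ^ 2 + v ^ 2 = ℓ := by
  have : Fact ℓ.Prime := ⟨hℓ⟩
  obtain ⟨a, b, hab⟩ := Nat.Prime.sq_add_sq (p := ℓ) (by omega)
  exact ⟨a, b, by exact_mod_cast hab⟩

lemma jacobiSym_eq_of_modEq {n ℓ : ℕ} (hℓ : ℓ % 4 = 1) (hn : Odd n) {a : ℤ}
    (h : (ℓ : ℤ) ≡ a [ZMOD n]) : jacobiSym n ℓ = jacobiSym a n := by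
  rw [← jacobiSym.quadratic_reciprocity_one_mod_four hℓ hn]
  exact jacobiSym.mod_left' h

lemma ZMod.natCast_eq_neg_one_of_modEq {ℓ n : ℕ} (h : (ℓ : ℤ) ≡ -1 [ZMOD n]) :
    (ℓ : ZMod n) = -1 := by
  exact_mod_cast (ZMod.intCast_eq_intCast_iff _ _ n).mpr h

/-- `B` is a prime `ℓ ≡ n - 1 (mod 4n)`, given by Dirichlet's theorem. -/
lemma exists_legendreData_of_mod_four_eq_two {n : ℕ} (hn : n % 4 = 2) :
    ∃ B, LegendreData n B ∧ ∃ u v : ℤ, u ^ 2 + v ^ 2 = B := by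
  obtain ⟨j, rfl⟩ : ∃ j, n = 2 * (2 * j + 1) := ⟨n / 4, by omega⟩
  obtain ⟨ℓ, hℓn, hℓ, hmod⟩ := Nat.forall_exists_prime_gt_and_zmodEq (2 * (2 * j + 1))
    (q := 4 * (2 * (2 * j + 1))) (a := 4 * j + 1) (by omega) ⟨4 * j + 1, -j, by push_cast; ring⟩
  push_cast at hmod
  have hmodn : (ℓ : ℤ) ≡ -1 [ZMOD (2 * (2 * j + 1) : ℕ)] :=
    (hmod.of_dvd (by push_cast; exact dvd_mul_left _ _)).trans
      (Int.modEq_iff_dvd.mpr ⟨-1, by push_cast; ring⟩)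
  have hmod8 : (ℓ : ℤ) ≡ 4 * j + 1 [ZMOD 8] := hmod.of_dvd ⟨2 * j + 1, by ring⟩
  unfold Int.ModEq at hmod8
  have h4 : ℓ % 4 = 1 := by omega
  have hodd : Odd (2 * j + 1) := odd_two_mul_add_one j
  have hJ : jacobiSym (2 * (2 * j + 1) : ℕ) ℓ = 1 := by
    rw [Nat.cast_mul, Nat.cast_two, jacobiSym.mul_left,
      jacobiSym.at_two (Nat.odd_iff.mpr (by omega)),
      jacobiSym_eq_of_modEq h4 hodd (hmodn.of_dvd ⟨2, by push_cast; ring⟩),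
      jacobiSym.at_neg_one hodd,
      ZMod.χ₈_nat_eq_if_mod_eight, ZMod.χ₄_nat_eq_if_mod_four]
    have : ℓ % 8 = 1 ∧ (2 * j + 1) % 4 = 1 ∨ ℓ % 8 = 5 ∧ (2 * j + 1) % 4 = 3 := by omega
    rcases this with ⟨h1, h2⟩ | ⟨h1, h2⟩ <;> simp [h1, h2, show ℓ % 2 = 1 by omega]
  exact ⟨ℓ, legendreData_prime hℓ (by omega) hℓn (ZMod.natCast_eq_neg_one_of_modEq hmodn) hJ,
    exists_sq_add_sq_of_prime hℓ h4⟩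

/-- `B` is a prime `ℓ ≡ 2n - 1 (mod 4n)`, given by Dirichlet's theorem. -/
lemma exists_legendreData_of_mod_four_eq_one {n : ℕ} (hn : n % 4 = 1) :
    ∃ B, LegendreData n B ∧ ∃ u v : ℤ, u ^ 2 + v ^ 2 = B := by
  obtain ⟨ℓ, hℓn, hℓ, hmod⟩ := Nat.forall_exists_prime_gt_and_zmodEq n (q := 4 * n) (a := 2 * n - 1)
    (by omega) ⟨-(2 * n + 1), n, by push_cast; ring⟩
  push_cast at hmod
  have hmodn : (ℓ : ℤ) ≡ -1 [ZMOD n] :=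
    (hmod.of_dvd (dvd_mul_left _ _)).trans (Int.modEq_iff_dvd.mpr ⟨-2, by ring⟩)
  have hmod4 : (ℓ : ℤ) ≡ 2 * n - 1 [ZMOD 4] := hmod.of_dvd (dvd_mul_right _ _)
  unfold Int.ModEq at hmod4
  have h4 : ℓ % 4 = 1 := by omega
  have hodd : Odd n := Nat.odd_iff.mpr (by omega)
  have hJ : jacobiSym n ℓ = 1 := by
    rw [jacobiSym_eq_of_modEq h4 hodd hmodn, jacobiSym.at_neg_one hodd, ZMod.χ₄_nat_one_mod_four hn]
  exact ⟨ℓ, legendreData_prime hℓ (by omega) hℓn (ZMod.natCast_eq_neg_one_of_modEq hmodn) hJ,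
    exists_sq_add_sq_of_prime hℓ h4⟩

/-- `B = 2ℓ` for a prime `ℓ ≡ (n - 1) / 2 (mod 4n)`, given by Dirichlet's theorem. -/
lemma exists_legendreData_of_mod_eight_eq_three {n : ℕ} (hn : n % 8 = 3) :
    ∃ B, LegendreData n B ∧ ∃ u v : ℤ, u ^ 2 + v ^ 2 = B := by
  obtain ⟨j, rfl⟩ : ∃ j, n = 8 * j + 3 := ⟨n / 8, by omega⟩
  obtain ⟨ℓ, hℓn, hℓ, hmod⟩ := Nat.forall_exists_prime_gt_and_zmodEq (8 * j + 3)
    (q := 4 * (8 * j + 3)) (a := 4 * j + 1) (by omega) ⟨8 * j + 1, -j, by push_cast; ring⟩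
  push_cast at hmod
  have hmodn : (2 * ℓ : ℤ) ≡ -1 [ZMOD (8 * j + 3 : ℕ)] :=
    ((hmod.of_dvd (by push_cast; exact dvd_mul_left _ _)).mul_left 2).trans
      (Int.modEq_iff_dvd.mpr ⟨-1, by push_cast; ring⟩)
  have hmod4 : (ℓ : ℤ) ≡ 4 * j + 1 [ZMOD 4] := hmod.of_dvd (dvd_mul_right _ _)
  unfold Int.ModEq at hmod4
  have h4 : ℓ % 4 = 1 := by omega
  have hodd : Odd (8 * j + 3) := Nat.odd_iff.mpr (by omega)
  have hJ : jacobiSym (8 * j + 3 : ℕ) ℓ = 1 := by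
    have h4ℓ : jacobiSym (4 * ℓ) (8 * j + 3) = jacobiSym ℓ (8 * j + 3) := by
      rw [jacobiSym.mul_left, show (4 : ℤ) = 2 ^ 2 by norm_num,
        jacobiSym.sq_one' (a := 2)
        (by rw [← Nat.cast_two, Int.gcd_natCast_natCast]; exact Nat.coprime_two_left.mpr hodd),
        one_mul]
    have h4mod : (4 * ℓ : ℤ) ≡ -2 [ZMOD (8 * j + 3 : ℕ)] := by
      convert hmodn.mul_left 2 using 1 <;> ring
    rw [jacobiSym_eq_of_modEq h4 hodd (a := ℓ) rfl, ← h4ℓ, jacobiSym.mod_left' h4mod,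
      jacobiSym.at_neg_two hodd, ZMod.χ₈'_nat_eq_if_mod_eight]
    simp [show (8 * j + 3) % 8 = 3 by omega, show (8 * j + 3) % 2 = 1 by omega]
  refine ⟨2 * ℓ, legendreData_two_mul_prime hℓ (Nat.odd_iff.mpr (by omega)) hodd hℓn
    (by exact_mod_cast (ZMod.intCast_eq_intCast_iff _ _ _).mpr hmodn) hJ, ?_⟩
  obtain ⟨a, b, hab⟩ := exists_sq_add_sq_of_prime hℓ h4
  exact ⟨a + b, a - b, by push_cast; linear_combination 2 * hab⟩

lemma LegendreData.exists_three_sq_rat {n B : ℕ} (h : LegendreData n B) (hn : ¬ IsSquare n)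
    {u v : ℤ} (huv : u ^ 2 + v ^ 2 = B) : ∃ t : Fin 3 → ℚ, t ⬝ᵥ t = n := by
  obtain ⟨x, y, z, hxyz, hz⟩ := h.exists_sol hn
  refine ⟨![x / z, u * y / z, v * y / z], ?_⟩
  have hz' : (z : ℚ) ≠ 0 := by exact_mod_cast hz
  have h1 : (x : ℚ) ^ 2 + B * y ^ 2 = n * z ^ 2 := by exact_mod_cast hxyz
  have h2 : (u : ℚ) ^ 2 + v ^ 2 = B := by exact_mod_cast huv
  simp only [dotProduct, Fin.sum_univ_three, Matrix.cons_val_zero, Matrix.cons_val_one,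
    Matrix.cons_val_two, Matrix.head_cons, Matrix.tail_cons]
  field_simp
  linear_combination h1 + y ^ 2 * h2

theorem Squarefree.exists_three_sq_rat {n : ℕ} (hn : Squarefree n) (h7 : n % 8 ≠ 7) :
    ∃ t : Fin 3 → ℚ, t ⬝ᵥ t = n := by
  rcases eq_or_ne n 1 with rfl | h1
  · exact ⟨![1, 0, 0], by simp [dotProduct, Fin.sum_univ_three]⟩
  have hsq : ¬ IsSquare n := by
    rintro ⟨s, rfl⟩
    exact h1 (by rw [Nat.isUnit_iff.mp (hn s dvd_rfl), mul_one])
  have h4 : n % 4 ≠ 0 := fun h => by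
    simpa using hn 2 (by obtain ⟨k, hk⟩ := Nat.dvd_of_mod_eq_zero h; exact ⟨k, by omega⟩)
  obtain ⟨B, hB, u, v, huv⟩ : ∃ B, LegendreData n B ∧ ∃ u v : ℤ, u ^ 2 + v ^ 2 = B := by
    rcases (by omega : n % 4 = 2 ∨ n % 4 = 1 ∨ n % 8 = 3) with h | h | h
    · exact exists_legendreData_of_mod_four_eq_two h
    · exact exists_legendreData_of_mod_four_eq_one h
    · exact exists_legendreData_of_mod_eight_eq_three h
  exact hB.exists_three_sq_rat hsq huv

lemma exists_three_sq_rat_of_sq_mul {T a b : ℕ} (hT : b ^ 2 * a = T) (ha : Squarefree a)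
    (h7 : a % 8 ≠ 7) : ∃ t : Fin 3 → ℚ, t ⬝ᵥ t = T := by
  obtain ⟨t, ht⟩ := ha.exists_three_sq_rat h7
  exact ⟨(b : ℚ) • t, by rw [dotProduct_smul, smul_dotProduct, ht, ← hT]; push_cast; ring⟩

lemma Nat.sq_mod_eight_of_odd {x : ℕ} (hx : Odd x) : x ^ 2 % 8 = 1 := by
  rw [Nat.pow_mod]
  have h2 : x % 2 = 1 := Nat.odd_iff.mp hx
  have h8 : x % 8 < 8 := Nat.mod_lt _ (by norm_num)
  interval_cases h : x % 8 <;> omega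

/-- Cancel common factors `2` of `w` and `D`, then use that odd squares are `1 (mod 8)`. -/
lemma Nat.mod_eight_eq_of_mul_sq_eq {A u w D : ℕ} (hA : Odd A) (hu : Odd u) (hD : D ≠ 0)
    (h : A * w ^ 2 = u * D ^ 2) : A % 8 = u % 8 := by
  induction D using Nat.strong_induction_on generalizing w with
  | _ D ih =>
  rcases Nat.even_or_odd D with ⟨D', rfl⟩ | hDodd
  · have hw : Even w := by
      have : Even (A * w ^ 2) :=
        h ▸ Nat.even_mul.mpr (Or.inr (Nat.even_pow.mpr ⟨⟨D', rfl⟩, two_ne_zero⟩))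
      simpa [Nat.even_mul, Nat.even_pow, Nat.not_even_iff_odd.mpr hA] using this
    obtain ⟨w', rfl⟩ := hw
    refine ih D' (by omega) (w := w') (by omega)
      (Nat.eq_of_mul_eq_mul_left (by norm_num : 0 < 4) ?_)
    calc 4 * (A * w' ^ 2) = A * (w' + w') ^ 2 := by ring
      _ = u * (D' + D') ^ 2 := h
      _ = 4 * (u * D' ^ 2) := by ring
  · have hw : Odd w := by
      have : Odd (A * w ^ 2) := h ▸ hu.mul (hDodd.pow)
      exact Nat.Odd.of_mul_right (Nat.odd_mul.mp this).2
    have h8 := congrArg (· % 8) h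
    simp only [Nat.mul_mod A, Nat.mul_mod u, Nat.sq_mod_eight_of_odd hw,
      Nat.sq_mod_eight_of_odd hDodd, mul_one, Nat.mod_mod] at h8
    exact h8

/-- One of `2rm(4m + 1)` and `2rm(4m - 3)` is a sum of three rational squares: their product is
`(2rm)²` times `(4m + 1)(4m - 3) ≡ 5 (mod 8)`, so their squarefree parts cannot both be
`≡ 7 (mod 8)`. -/
lemma exists_three_sq_rat_selection {m r : ℕ} (hm : 0 < m) (hr : 0 < r) :
    ∃ k : ℚ, ∃ t : Fin 3 → ℚ, t ⬝ᵥ t = 2 * r * m * (4 * m + 1 - k ^ 2) := by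
  obtain ⟨m, rfl⟩ : ∃ m', m = m' + 1 := ⟨m - 1, by omega⟩
  obtain ⟨a₀, b₀, h₀, hsf₀⟩ := Nat.sq_mul_squarefree (2 * r * (m + 1) * (4 * m + 5))
  obtain ⟨a₂, b₂, h₂, hsf₂⟩ := Nat.sq_mul_squarefree (2 * r * (m + 1) * (4 * m + 1))
  by_cases h7 : a₀ % 8 = 7
  · have h7' : a₂ % 8 ≠ 7 := fun h7' => by
      have key : a₀ * a₂ * (b₀ * b₂) ^ 2 = (4 * m + 5) * (4 * m + 1) * (2 * r * (m + 1)) ^ 2 := by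
        calc a₀ * a₂ * (b₀ * b₂) ^ 2 = (b₀ ^ 2 * a₀) * (b₂ ^ 2 * a₂) := by ring
          _ = _ := by rw [h₀, h₂]; ring
      have hA : (a₀ * a₂) % 8 = 1 := by rw [Nat.mul_mod, h7, h7']
      have hu : (4 * m + 5) * (4 * m + 1) % 8 = 5 := by
        rw [show (4 * m + 5) * (4 * m + 1) = 8 * (2 * m ^ 2 + 3 * m) + 5 by ring]; omega
      have := Nat.mod_eight_eq_of_mul_sq_eq (Nat.odd_iff.mpr (by omega))
        (Nat.odd_iff.mpr (by omega)) (by positivity) key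
      omega
    obtain ⟨t, ht⟩ := exists_three_sq_rat_of_sq_mul h₂ hsf₂ h7'
    exact ⟨2, t, by rw [ht]; push_cast; ring⟩
  · obtain ⟨t, ht⟩ := exists_three_sq_rat_of_sq_mul h₀ hsf₀ h7
    exact ⟨0, t, by rw [ht]; push_cast; ring⟩

/-- Taking `c = (k - 1) / 4m`, the equation becomes `|4m t|² = 2rm(4m + 1 - k²)`. -/
theorem exists_simplex_sol {m r : ℕ} (hm : 0 < m) (hr : 0 < r) :
    ∃ (c : ℚ) (t : Fin 3 → ℚ), 2 * r * m * c ^ 2 + r * c + t ⬝ᵥ t = r / 2 := by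
  obtain ⟨k, t, ht⟩ := exists_three_sq_rat_selection hm hr
  refine ⟨(k - 1) / (4 * m), (4 * m : ℚ)⁻¹ • t, ?_⟩
  have : (m : ℚ) ≠ 0 := by positivity
  rw [dotProduct_smul, smul_dotProduct, ht, smul_eq_mul, smul_eq_mul]
  field_simp
  ring

lemma hasCliqueQ.le_add_one {n M : ℕ} {d : ℚ} (h : hasCliqueQ n M d) (hd : 0 < d) :
    M ≤ n + 1 := by
  obtain ⟨p, hp⟩ := hasCliqueQ_iff.mp h
  simpa using hp.le_card_add_one hd

lemma hasCliqueQ.realizedQ {n M : ℕ} {d : ℚ} (h : hasCliqueQ n M d) (hd : 0 < d) (hM : 2 ≤ M) :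
    realizedQ n d := by
  obtain ⟨p, hp⟩ := h
  exact ⟨hd, p ⟨0, by omega⟩, p ⟨1, by omega⟩, hp _ _ (by simp)⟩

/-- Writing `d = (num · den) / den²` reduces to the case of an integral square side. -/
theorem hasCliqueQ_four_mul_add_one {m : ℕ} (hm : 0 < m) {d : ℚ} (hd : 0 < d) :
    hasCliqueQ (4 * m + 3) (4 * m + 1) d := by
  have hnum : 0 < d.num := Rat.num_pos.mpr hd
  obtain ⟨c, t, h⟩ := exists_simplex_sol (r := d.num.toNat * d.den) hm
    (Nat.mul_pos (by omega) d.den_pos)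
  obtain ⟨p, hp⟩ := exists_isEquilateral_of_simplex_sol h
  have := (hp.smul (d.den : ℚ)⁻¹).hasCliqueQ
  simp only [Fintype.card_sum, Fintype.card_option, Fintype.card_prod, Fintype.card_fin] at this
  convert this using 1
  have : ((d.num.toNat : ℕ) : ℚ) = d.num := by exact_mod_cast Int.toNat_of_nonneg hnum.le
  push_cast [this]
  nth_rewrite 1 [← Rat.num_div_den d]
  field_simp

/-- For `n = 4m + 3 ≡ 3 (mod 4)` and any positive integer `r`: every `n - 3 = 4m`
points of `ℚⁿ` pairwise at distance `√r` extend by a further point of `ℚⁿ` at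
distance `√r` from all of them; consequently `ω(ℚⁿ, √r) ≥ n - 2` and
`C₁(ℚⁿ) - c₁(ℚⁿ) ≤ 3`. -/
theorem stmt_15 (m r : ℕ) (hm : 0 < m) (hr : 0 < r) :
    (∀ P : Fin (4 * m) → (Fin (4 * m + 3) → ℚ),
      (∀ i j, i ≠ j → ∑ k, (P i k - P j k) ^ 2 = (r : ℚ)) →
      ∃ Q : Fin (4 * m + 3) → ℚ, ∀ i, ∑ k, (Q k - P i k) ^ 2 = (r : ℚ)) ∧
    (4 * m + 3) - 2 ≤ omegaQ (4 * m + 3) (r : ℚ) ∧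
    C1Q (4 * m + 3) - c1Q (4 * m + 3) ≤ 3 := by
  have hr' : (0 : ℚ) < r := by exact_mod_cast hr
  have hω : ∀ d : ℚ, 0 < d → 4 * m + 1 ≤ omegaQ (4 * m + 3) d := fun d hd =>
    le_csSup ⟨4 * m + 4, fun M hM => hM.le_add_one hd⟩ (hasCliqueQ_four_mul_add_one hm hd)
  refine ⟨fun P hP => ?_, by simpa using hω r hr', ?_⟩
  · obtain ⟨C, hC⟩ := hasCliqueQ_iff.mp (hasCliqueQ_four_mul_add_one hm hr')
    simp only [sum_sub_sq_eq_dotProduct] at hP ⊢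
    exact hC.exists_extension (by omega) hP
  · have hC1 : C1Q (4 * m + 3) ≤ 4 * m + 4 :=
      csSup_le' fun M ⟨d, ⟨hd, _⟩, hM⟩ => hM.le_add_one hd
    have hc1 : 4 * m + 1 ≤ c1Q (4 * m + 3) :=
      le_csInf ⟨_, r, (hasCliqueQ_four_mul_add_one hm hr').realizedQ hr' (by omega), rfl⟩
        (by rintro k ⟨d, ⟨hd, -⟩, rfl⟩; exact hω d hd)
    omega
end

section
/- For every square-free even positive integer r, there exist positive integers a, b with a < b such that r·(4a - b)/a is a rational square and ab - a² ≡ 1 (mod 4); in particular ab - a² is a sum of three integer squares. -/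
/-- For every square-free even positive integer `r` there exist positive integers
`a < b` with `r(4a - b)/a` a rational square and `ab - a² ≡ 1 (mod 4)`; in
particular `ab - a²` is a sum of three integer squares. -/
theorem stmt_17 (r : ℕ) (hr : 0 < r) (hsf : Squarefree r) (he : Even r) :
    ∃ a b : ℤ, 0 < a ∧ a < b ∧
      (∃ q : ℚ, (r : ℚ) * (4 * (a : ℚ) - (b : ℚ)) / (a : ℚ) = q ^ 2) ∧
      (a * b - a ^ 2) % 4 = 1 ∧
      (∃ x y z : ℤ, a * b - a ^ 2 = x ^ 2 + y ^ 2 + z ^ 2) := by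
  have h2 : 2 ∣ r := he.two_dvd
  have h4 : ¬ (4:ℕ) ∣ r := by
    intro h
    exact (by decide : ¬ IsUnit (2:ℕ)) (hsf 2 (by omega))
  obtain ⟨t, ht⟩ : ∃ t : ℕ, r = 8*t+2 ∨ r = 8*t+6 := ⟨r/8, by omega⟩
  rcases ht with h | h
  · -- r = 8t+2, V = 2t+1
    refine ⟨(2*(t:ℤ)+1)^2, 16*(t:ℤ)^2+8*(t:ℤ)+2, by positivity, by nlinarith [sq_nonneg ((t:ℤ))],
      ⟨(r:ℚ)/(2*(t:ℚ)+1), ?_⟩, ?_, ⟨2*(t:ℤ)*(2*(t:ℤ)+1), 2*(t:ℤ)*(2*(t:ℤ)+1), (2*(t:ℤ)+1)^2, by ring⟩⟩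
    · have hr' : (r:ℚ) = 8*(t:ℚ)+2 := by exact_mod_cast congrArg (Nat.cast : ℕ → ℚ) h
      have hne : (2*(t:ℚ)+1) ≠ 0 := by positivity
      push_cast
      rw [hr']
      field_simp
      ring
    · rw [show (2*(t:ℤ)+1)^2 * (16*(t:ℤ)^2+8*(t:ℤ)+2) - ((2*(t:ℤ)+1)^2)^2
          = 4*(12*(t:ℤ)^4+16*(t:ℤ)^3+8*(t:ℤ)^2+2*(t:ℤ)) + 1 from by ring]
      omega
  · -- r = 8t+6, V = 2t+3
    refine ⟨(2*(t:ℤ)+3)^2, 16*(t:ℤ)^2+40*(t:ℤ)+30, by positivity, by nlinarith [sq_nonneg ((t:ℤ))],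
      ⟨(r:ℚ)/(2*(t:ℚ)+3), ?_⟩, ?_,
      ⟨(2*(t:ℤ)+3)*(2*(t:ℤ)+2), (2*(t:ℤ)+3)*(2*(t:ℤ)+4), (2*(t:ℤ)+3)*(2*(t:ℤ)+1), by ring⟩⟩
    · have hr' : (r:ℚ) = 8*(t:ℚ)+6 := by exact_mod_cast congrArg (Nat.cast : ℕ → ℚ) h
      have hne : (2*(t:ℚ)+3) ≠ 0 := by positivity
      push_cast
      rw [hr']
      field_simp
      ring
    · rw [show (2*(t:ℤ)+3)^2 * (16*(t:ℤ)^2+40*(t:ℤ)+30) - ((2*(t:ℤ)+3)^2)^2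
          = 4*(12*(t:ℤ)^4+64*(t:ℤ)^3+132*(t:ℤ)^2+126*(t:ℤ)+47) + 1 from by ring]
      omega
end

section
/- For every positive rational r, the complete tripartite graph K_{1,3,3} is a subgraph of the distance-√r graph on ℚ⁵: there exist points c, a₁, a₂, a₃, b₁, b₂, b₃ ∈ ℚ⁵, with {c}, {a₁,a₂,a₃}, {b₁,b₂,b₃} forming the three parts, such that any two points from different parts are at Euclidean distance √r, and points within a part are pairwise distinct. -/
/-!
Write `2r = normSq q` for a rational quaternion `q` (four squares theorem) and read `ℚ⁵` as
`ℍ[ℚ] × ℚ`. Take `c = 0`, `aᵢ = (q (1/2 + αᵢ i), tᵢ)` and `bⱼ = (q (1/2 + βⱼ j + γⱼ k), 0)`.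
Left multiplication by `q` scales squared lengths by `2r`, and `αᵢ i` is orthogonal to
`βⱼ j + γⱼ k`, so all fifteen squared distances equal `r` as soon as every `bⱼ` satisfies
`β² + γ² = 1/4` and every `aᵢ` satisfies `2r α² + t² = r/2`. The circle has the rational points
`(1/2, 0)` and `(±3/10, 2/5)`; the conic `2r α² + t² = r/2` has the rational point `(1/2, 0)`,
hence a rational point with `t ≠ 0`, and its mirror image `t ↦ -t`.
-/

open Quaternion

theorem exists_quaternion_normSq_eq {r : ℚ} (hr : 0 ≤ r) : ∃ q : ℍ[ℚ], normSq q = r := by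
  obtain ⟨a, b, c, d, habcd⟩ := Nat.sum_four_squares (r.num.toNat * r.den)
  have hnum : (r.num.toNat : ℚ) = r * r.den := by
    rw [← Int.cast_natCast, Int.toNat_of_nonneg (Rat.num_nonneg.mpr hr), Rat.mul_den_eq_num]
  have hsum : ((a : ℚ) ^ 2 + b ^ 2 + c ^ 2 + d ^ 2) = r * r.den * r.den := by
    rw [← hnum]; exact_mod_cast habcd
  refine ⟨(equivTuple ℚ).symm ![a / r.den, b / r.den, c / r.den, d / r.den], ?_⟩
  rw [normSq_def']
  simp only [equivTuple_symm_apply, Matrix.cons_val]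
  field_simp
  linear_combination hsum

section Coordinates

variable {R : Type*} [CommRing R]

def toFin5 (p : ℍ[R]) (t : R) : Fin 5 → R := ![p.re, p.imI, p.imJ, p.imK, t]

theorem sum_sq_sub_toFin5 (p p' : ℍ[R]) (t t' : R) :
    ∑ k, (toFin5 p t k - toFin5 p' t' k) ^ 2 = normSq (p - p') + (t - t') ^ 2 := by
  simp [Fin.sum_univ_five, toFin5, normSq_def']

theorem toFin5_injective (t : R) : Function.Injective (toFin5 · t : ℍ[R] → Fin 5 → R) :=
  fun p p' h ↦ Quaternion.ext p p' (congrFun h 0) (congrFun h 1) (congrFun h 2) (congrFun h 3)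

end Coordinates

section Configuration

def halfAddI (α : ℚ) : ℍ[ℚ] := (equivTuple ℚ).symm ![1 / 2, α, 0, 0]

def halfAddJK (β γ : ℚ) : ℍ[ℚ] := (equivTuple ℚ).symm ![1 / 2, 0, β, γ]

variable (q : ℍ[ℚ]) {α t β γ : ℚ}

theorem sum_sq_toFin5_zero_sub_mul_halfAddI (hA : normSq q * α ^ 2 + t ^ 2 = normSq q / 4) :
    ∑ k, (toFin5 0 0 k - toFin5 (q * halfAddI α) t k) ^ 2 = normSq q / 2 := by
  rw [sum_sq_sub_toFin5, zero_sub, normSq_neg, map_mul, normSq_def' (halfAddI α)]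
  simp only [halfAddI, equivTuple_symm_apply, Matrix.cons_val]
  linear_combination hA

theorem sum_sq_toFin5_zero_sub_mul_halfAddJK (hB : β ^ 2 + γ ^ 2 = 1 / 4) :
    ∑ k, (toFin5 0 0 k - toFin5 (q * halfAddJK β γ) 0 k) ^ 2 = normSq q / 2 := by
  rw [sum_sq_sub_toFin5, zero_sub, normSq_neg, map_mul, normSq_def' (halfAddJK β γ)]
  simp only [halfAddJK, equivTuple_symm_apply, Matrix.cons_val]
  linear_combination normSq q * hB

theorem sum_sq_toFin5_mul_halfAddI_sub_mul_halfAddJK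
    (hA : normSq q * α ^ 2 + t ^ 2 = normSq q / 4) (hB : β ^ 2 + γ ^ 2 = 1 / 4) :
    ∑ k, (toFin5 (q * halfAddI α) t k - toFin5 (q * halfAddJK β γ) 0 k) ^ 2 = normSq q / 2 := by
  rw [sum_sq_sub_toFin5, ← mul_sub, map_mul, normSq_def' (halfAddI α - halfAddJK β γ)]
  simp only [re_sub, imI_sub, imJ_sub, imK_sub]
  simp only [halfAddI, halfAddJK, equivTuple_symm_apply, Matrix.cons_val]
  linear_combination hA + normSq q * hB

end Configuration

/-- The second intersection of the conic with the line `y = 1/2 - x` through its point `(1/2, 0)`. -/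
theorem exists_ne_zero_mul_sq_add_sq_eq {s : ℚ} (hs : 0 < s) :
    ∃ x y : ℚ, y ≠ 0 ∧ s * x ^ 2 + y ^ 2 = s / 4 :=
  ⟨(1 - s) / (2 * (1 + s)), s / (1 + s), by positivity, by field_simp; ring⟩

/-- For every positive rational `r`, the complete tripartite graph `K_{1,3,3}` is a
subgraph of the distance-`√r` graph on `ℚ⁵`: there are points `c`, `a₁ a₂ a₃`,
`b₁ b₂ b₃` of `ℚ⁵` (the three parts), pairwise distinct within parts, with any two
points from different parts at squared Euclidean distance `r`. -/
theorem stmt_19 (r : ℚ) (hr : 0 < r) :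
    ∃ (c : Fin 5 → ℚ) (a b : Fin 3 → (Fin 5 → ℚ)),
      Function.Injective a ∧ Function.Injective b ∧
      (∀ i, ∑ k, (c k - a i k) ^ 2 = r) ∧
      (∀ i, ∑ k, (c k - b i k) ^ 2 = r) ∧
      (∀ i j, ∑ k, (a i k - b j k) ^ 2 = r) := by
  obtain ⟨q, hq⟩ := exists_quaternion_normSq_eq (show 0 ≤ 2 * r by positivity)
  have hs : 0 < normSq q := by linarith
  obtain ⟨x, y, hy, hxy⟩ := exists_ne_zero_mul_sq_add_sq_eq hs
  let α : Fin 3 → ℚ := ![1 / 2, x, x]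
  let t : Fin 3 → ℚ := ![0, y, -y]
  let β : Fin 3 → ℚ := ![1 / 2, 3 / 10, -3 / 10]
  let γ : Fin 3 → ℚ := ![0, 2 / 5, 2 / 5]
  have hA : ∀ i, normSq q * α i ^ 2 + t i ^ 2 = normSq q / 4 := by
    intro i
    fin_cases i
    · show normSq q * (1 / 2) ^ 2 + 0 ^ 2 = normSq q / 4; ring
    · exact hxy
    · show normSq q * x ^ 2 + (-y) ^ 2 = normSq q / 4; linear_combination hxy
  have hB : ∀ j, β j ^ 2 + γ j ^ 2 = 1 / 4 := by
    intro j
    fin_cases j <;> norm_num [β, γ]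
  have ht : Function.Injective t := by
    simp [Function.Injective, Fin.forall_fin_succ, t, hy, hy.symm, neg_eq_self, self_eq_neg]
  have hβ : Function.Injective β := by
    norm_num [Function.Injective, Fin.forall_fin_succ, β]
  obtain rfl : r = normSq q / 2 := by linarith
  refine ⟨toFin5 0 0, fun i ↦ toFin5 (q * halfAddI (α i)) (t i),
    fun j ↦ toFin5 (q * halfAddJK (β j) (γ j)) 0, ?_, ?_,
    fun i ↦ sum_sq_toFin5_zero_sub_mul_halfAddI q (hA i),
    fun j ↦ sum_sq_toFin5_zero_sub_mul_halfAddJK q (hB j),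
    fun i j ↦ sum_sq_toFin5_mul_halfAddI_sub_mul_halfAddJK q (hA i) (hB j)⟩
  · exact Function.Injective.of_comp (f := fun v : Fin 5 → ℚ ↦ v 4) ht
  · refine ((toFin5_injective 0).comp (mul_right_injective₀ (normSq_ne_zero.1 hs.ne'))).comp ?_
    exact Function.Injective.of_comp (f := QuaternionAlgebra.imJ) hβ
end
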